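/- arXiv:1801.00898 — 7 statements merged into one kernel-verified Lean document; each statement's English description precedes it below -/
import Mathlib

section
/- Let (S, ρ) be a metric space in which all closed bounded subsets are compact, and let Q be a Borel probability measure on S whose Fréchet function F(p) = ∫ ρ²(p,q) Q(dq) is finite at some point. Then the set C(Q) of minimizers of F is nonempty and compact. -/
open MeasureTheory Filter Topology Set
open scoped ENNReal

/-!
By Fatou's lemma the Fréchet function `F` is lower semicontinuous, so its sublevel sets are
closed. The triangle inequality gives `ρ²(p, p') ≤ 2 F(p) + 2 F(p')`, so every sublevel set at a
finite level is bounded, hence compact by the Heine–Borel property. A lower semicontinuous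
function attains its minimum on the nonempty compact sublevel set `{F ≤ F(p₀)}`, and the set of
minimizers is a closed subset of it.
-/

theorem lowerSemicontinuous_lintegral {X α : Type*} [TopologicalSpace X]
    [FirstCountableTopology X] [MeasurableSpace α] {μ : Measure α} {f : X → α → ℝ≥0∞}
    (hf : ∀ a, LowerSemicontinuous (f · a)) (hf_meas : ∀ x, AEMeasurable (f x) μ) :
    LowerSemicontinuous fun x => ∫⁻ a, f x a ∂μ :=
  lowerSemicontinuous_iff_le_liminf.2 fun x => calc
    ∫⁻ a, f x a ∂μ ≤ ∫⁻ a, liminf (f · a) (𝓝 x) ∂μ := lintegral_mono fun a => (hf a).le_liminf x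
    _ ≤ liminf (fun y => ∫⁻ a, f y a ∂μ) (𝓝 x) := lintegral_liminf_le' hf_meas

theorem LowerSemicontinuous.nonempty_and_isCompact_setOf_forall_le {X β : Type*}
    [TopologicalSpace X] [LinearOrder β] {f : X → β} (hf : LowerSemicontinuous f) {x₀ : X}
    (hK : IsCompact {x | f x ≤ f x₀}) :
    {x | ∀ y, f x ≤ f y}.Nonempty ∧ IsCompact {x | ∀ y, f x ≤ f y} := by
  obtain ⟨m, -, hm⟩ := (hf.lowerSemicontinuousOn _).exists_isMinOn ⟨x₀, le_refl (f x₀)⟩ hK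
  have hm_min : ∀ y, f m ≤ f y := fun y =>
    (le_total (f y) (f x₀)).elim (fun hy => hm hy) fun hy => (hm (le_refl (f x₀))).trans hy
  have hclosed : IsClosed {x | ∀ y, f x ≤ f y} := by
    rw [ofPred_forall]
    exact isClosed_iInter fun y => hf.isClosed_preimage (f y)
  exact ⟨⟨m, hm_min⟩, hK.of_isClosed_subset hclosed fun x hx => hx x₀⟩

section Frechet

variable {S : Type*} [PseudoMetricSpace S] [MeasurableSpace S]

noncomputable def frechetFunction (μ : Measure S) (p : S) : ℝ≥0∞ :=
  ∫⁻ q, ENNReal.ofReal (dist p q ^ 2) ∂μ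

theorem lowerSemicontinuous_frechetFunction [OpensMeasurableSpace S] (μ : Measure S) :
    LowerSemicontinuous (frechetFunction μ) :=
  lowerSemicontinuous_lintegral
    (fun _ => (ENNReal.continuous_ofReal.comp (by fun_prop)).lowerSemicontinuous)
    fun _ => (ENNReal.continuous_ofReal.comp (by fun_prop)).measurable.aemeasurable

theorem ofReal_dist_sq_le_frechetFunction [OpensMeasurableSpace S] (μ : Measure S)
    [IsProbabilityMeasure μ] (p p' : S) :
    ENNReal.ofReal (dist p p' ^ 2) ≤ 2 * frechetFunction μ p + 2 * frechetFunction μ p' := by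
  have hpt : ∀ q, ENNReal.ofReal (dist p p' ^ 2) ≤
      2 * ENNReal.ofReal (dist p q ^ 2) + 2 * ENNReal.ofReal (dist p' q ^ 2) := by
    intro q
    rw [← ENNReal.ofReal_ofNat 2, ← ENNReal.ofReal_mul zero_le_two,
      ← ENNReal.ofReal_mul zero_le_two, ← ENNReal.ofReal_add (by positivity) (by positivity)]
    refine ENNReal.ofReal_le_ofReal ?_
    nlinarith [dist_triangle_right p p' q, dist_nonneg (x := p) (y := p'),
      sq_nonneg (dist p q - dist p' q)]
  have hmeas : ∀ x : S, Measurable fun q => ENNReal.ofReal (dist x q ^ 2) := fun x =>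
    (ENNReal.continuous_ofReal.comp (by fun_prop)).measurable
  calc ENNReal.ofReal (dist p p' ^ 2) = ∫⁻ _, ENNReal.ofReal (dist p p' ^ 2) ∂μ := by
        rw [lintegral_const, measure_univ, mul_one]
    _ ≤ ∫⁻ q, 2 * ENNReal.ofReal (dist p q ^ 2) + 2 * ENNReal.ofReal (dist p' q ^ 2) ∂μ :=
        lintegral_mono hpt
    _ = 2 * frechetFunction μ p + 2 * frechetFunction μ p' := by
        rw [lintegral_add_left ((hmeas p).const_mul 2), lintegral_const_mul 2 (hmeas p),
          lintegral_const_mul 2 (hmeas p')]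
        rfl

theorem isCompact_setOf_frechetFunction_le [ProperSpace S] [OpensMeasurableSpace S]
    (μ : Measure S) [IsProbabilityMeasure μ] {c : ℝ≥0∞} (hc : c ≠ ∞) :
    IsCompact {p | frechetFunction μ p ≤ c} := by
  refine Metric.isCompact_of_isClosed_isBounded
    ((lowerSemicontinuous_frechetFunction μ).isClosed_preimage c) ?_
  refine Metric.isBounded_iff.2 ⟨√(4 * c).toReal, fun p hp p' hp' => Real.le_sqrt_of_sq_le ?_⟩
  have h4c : ENNReal.ofReal (dist p p' ^ 2) ≤ 4 * c := calc
    ENNReal.ofReal (dist p p' ^ 2) ≤ 2 * frechetFunction μ p + 2 * frechetFunction μ p' :=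
      ofReal_dist_sq_le_frechetFunction μ p p'
    _ ≤ 2 * c + 2 * c := by gcongr <;> assumption
    _ = 4 * c := by ring
  exact (ENNReal.ofReal_le_iff_le_toReal (ENNReal.mul_ne_top (by norm_num) hc)).1 h4c

end Frechet

/-- On a metric space with the Heine–Borel property (proper space), if the Fréchet
function of a Borel probability measure is finite at some point, then the Fréchet
mean set (set of minimizers) is nonempty and compact. -/
theorem frechet_mean_set_nonempty_compact
    {S : Type*} [MetricSpace S] [ProperSpace S]
    [MeasurableSpace S] [BorelSpace S]
    (Q : Measure S) [IsProbabilityMeasure Q]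
    (F : S → ℝ≥0∞)
    (hF : ∀ p, F p = ∫⁻ q, ENNReal.ofReal (dist p q ^ 2) ∂Q)
    (hfin : ∃ p, F p < ⊤) :
    {p : S | ∀ q, F p ≤ F q}.Nonempty ∧ IsCompact {p : S | ∀ q, F p ≤ F q} := by
  obtain rfl : F = frechetFunction Q := funext hF
  obtain ⟨p₀, hp₀⟩ := hfin
  exact (lowerSemicontinuous_frechetFunction Q).nonempty_and_isCompact_setOf_forall_le
    (isCompact_setOf_frechetFunction_le Q hp₀.ne)
end

section
/- Let (S, ρ) be a compact metric space, Q a Borel probability on S, and Q_n the empirical measure of an i.i.d. sample X_1,…,X_n from Q. Then sup_{p∈S} |F_n(p) − F(p)| → 0 almost surely as n → ∞, where F and F_n are the Fréchet functions of Q and Q_n respectively. -/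
open MeasureTheory ProbabilityTheory Filter Topology Finset

/-! The functions `p ↦ ρ(p, q)²` are `2 diam S`-Lipschitz uniformly in `q`, hence so are `F` and
every `F_n`. By the strong law of large numbers, `F_n(p) → F(p)` almost surely for each `p` in a
countable dense set, simultaneously for all of them; for an equicontinuous family on a compact
space, convergence on a dense set upgrades to uniform convergence. -/

theorem Equicontinuous.tendstoUniformly_of_tendsto_dense {ι X α : Type*} [TopologicalSpace X]
    [CompactSpace X] [UniformSpace α] {l : Filter ι} {F : ι → X → α} {f : X → α}
    (hF : Equicontinuous F) (hf : Continuous f) {D : Set X} (hD : Dense D)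
    (h : ∀ x ∈ D, Tendsto (F · x) l (𝓝 (f x))) : TendstoUniformly F f l := by
  have hall : ∀ x, Tendsto (F · x) l (𝓝 (f x)) := fun x =>
    (closure_minimal h (hF.isClosed_setOfPred_tendsto hf) : closure D ⊆ _) (hD x)
  exact UniformFun.tendsto_iff_tendstoUniformly.mp
    ((hF.tendsto_uniformFun_iff_pi l f).mpr (tendsto_pi_nhds.mpr hall))

theorem lipschitzWith_dist_sq_left {S : Type*} [PseudoMetricSpace S] [BoundedSpace S] (q : S) :
    LipschitzWith (2 * Metric.diam (Set.univ : Set S)).toNNReal (fun p => dist p q ^ 2) := by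
  refine LipschitzWith.of_dist_le' fun p p' => ?_
  have hdiam : ∀ x y : S, dist x y ≤ Metric.diam (Set.univ : Set S) := fun x y =>
    Metric.dist_le_diam_of_mem (Bornology.IsBounded.all _) trivial trivial
  calc dist (dist p q ^ 2) (dist p' q ^ 2)
      = |dist p q - dist p' q| * (dist p q + dist p' q) := by
        rw [Real.dist_eq, ← abs_of_nonneg (by positivity : 0 ≤ dist p q + dist p' q), ← abs_mul]
        ring_nf
    _ ≤ dist p p' * (2 * Metric.diam (Set.univ : Set S)) := by
        gcongr
        · exact abs_dist_sub_le p p' q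
        · linarith [hdiam p q, hdiam p' q]
    _ = _ := mul_comm _ _

theorem LipschitzWith.average {ι X : Type*} [PseudoMetricSpace X] {K : NNReal} {f : ι → X → ℝ}
    (hf : ∀ i, LipschitzWith K (f i)) (s : Finset ι) :
    LipschitzWith K fun x => (#s : ℝ)⁻¹ * ∑ i ∈ s, f i x := by
  refine LipschitzWith.of_dist_le_mul fun x y => ?_
  rcases s.eq_empty_or_nonempty with rfl | hs
  · simp only [card_empty, Nat.cast_zero, inv_zero, zero_mul, dist_self]; positivity
  calc dist ((#s : ℝ)⁻¹ * ∑ i ∈ s, f i x) ((#s : ℝ)⁻¹ * ∑ i ∈ s, f i y)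
      = (#s : ℝ)⁻¹ * |∑ i ∈ s, (f i x - f i y)| := by
        rw [Real.dist_eq, ← mul_sub, ← sum_sub_distrib, abs_mul, abs_of_nonneg (by positivity)]
    _ ≤ (#s : ℝ)⁻¹ * ∑ _i ∈ s, K * dist x y := by
        gcongr
        exact (abs_sum_le_sum_abs _ _).trans (sum_le_sum fun i _ => (hf i).dist_le_mul x y)
    _ = K * dist x y := by
        rw [sum_const, nsmul_eq_mul, ← mul_assoc,
          inv_mul_cancel₀ (by simpa using hs.ne_empty), one_mul]

theorem LipschitzWith.integral {X Y E : Type*} [PseudoMetricSpace X] [MeasurableSpace Y]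
    [NormedAddCommGroup E] [NormedSpace ℝ E] {μ : Measure Y} [IsProbabilityMeasure μ]
    {K : NNReal} {f : X → Y → E} (hf : ∀ y, LipschitzWith K (f · y))
    (hint : ∀ x, Integrable (f x) μ) : LipschitzWith K fun x => ∫ y, f x y ∂μ := by
  refine LipschitzWith.of_dist_le_mul fun x x' => ?_
  rw [dist_eq_norm, ← integral_sub (hint x) (hint x')]
  simpa using norm_integral_le_of_norm_le_const (μ := μ)
    (Eventually.of_forall fun y => (dist_eq_norm _ _).symm.trans_le ((hf y).dist_le_mul x x'))

theorem strong_law_ae_comp {Ω S : Type*} [MeasurableSpace Ω] [MeasurableSpace S]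
    {P : Measure Ω} {Q : Measure S} {X : ℕ → Ω → S} (hmeas : ∀ n, Measurable (X n))
    (hindep : iIndepFun X P) (hid : ∀ n, Measure.map (X n) P = Q)
    {g : S → ℝ} (hg : Measurable g) (hint : Integrable g Q) :
    ∀ᵐ ω ∂P, Tendsto (fun n : ℕ => (n : ℝ)⁻¹ * ∑ j ∈ range n, g (X j ω)) atTop
      (𝓝 (∫ q, g q ∂Q)) := by
  have hident : ∀ j, IdentDistrib (g ∘ X j) (g ∘ X 0) P P := fun j =>
    (IdentDistrib.mk (hmeas j).aemeasurable (hmeas 0).aemeasurable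
      (by rw [hid j, hid 0])).comp hg
  have hint0 : Integrable (g ∘ X 0) P := by
    rwa [← integrable_map_measure hg.aestronglyMeasurable (hmeas 0).aemeasurable, hid 0]
  have hpair : Pairwise fun i j => IndepFun (g ∘ X i) (g ∘ X j) P :=
    fun _ _ hij => (hindep.indepFun hij).comp hg hg
  have hmean : ∫ ω, (g ∘ X 0) ω ∂P = ∫ q, g q ∂Q := by
    rw [← hid 0, integral_map (hmeas 0).aemeasurable hg.aestronglyMeasurable]; rfl
  filter_upwards [strong_law_ae_real _ hint0 hpair hident] with ω hω
  rw [← hmean]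
  simpa only [div_eq_inv_mul, Function.comp_apply] using hω

theorem empirical_frechet_function_tendsto_uniformly_general
    {S : Type*} [MetricSpace S] [CompactSpace S] [MeasurableSpace S] [BorelSpace S]
    {Ω : Type*} [MeasurableSpace Ω] (P : Measure Ω)
    (Q : Measure S) [IsProbabilityMeasure Q]
    (X : ℕ → Ω → S) (hmeas : ∀ n, Measurable (X n))
    (hindep : ProbabilityTheory.iIndepFun X P)
    (hid : ∀ n, Measure.map (X n) P = Q)
    (F : S → ℝ) (hF : ∀ p, F p = ∫ q, dist p q ^ 2 ∂Q)
    (Fn : ℕ → Ω → S → ℝ)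
    (hFn : ∀ n ω p, Fn n ω p = (n : ℝ)⁻¹ * ∑ j ∈ Finset.range n, dist p (X j ω) ^ 2) :
    ∀ᵐ ω ∂P, TendstoUniformly (fun n p => Fn n ω p) F atTop := by
  obtain ⟨D, hD_countable, hD_dense⟩ := TopologicalSpace.exists_countable_dense S
  obtain ⟨K, hlip⟩ : ∃ K, ∀ q : S, LipschitzWith K fun p => dist p q ^ 2 :=
    ⟨_, lipschitzWith_dist_sq_left⟩
  have hint (p : S) : Integrable (fun q => dist p q ^ 2) Q :=
    (continuous_const.dist continuous_id).pow 2 |>.integrable_of_hasCompactSupport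
      (HasCompactSupport.of_compactSpace _)
  have hF_lip : LipschitzWith K F := by
    simpa only [← funext hF] using LipschitzWith.integral hlip hint
  have hslln : ∀ᵐ ω ∂P, ∀ p ∈ D, Tendsto (fun n => Fn n ω p) atTop (𝓝 (F p)) := by
    refine (ae_ball_iff hD_countable).mpr fun p _ => ?_
    simpa only [hFn, hF] using strong_law_ae_comp (g := fun q => dist p q ^ 2) hmeas hindep hid
      (measurable_const.dist measurable_id |>.pow_const 2) (hint p)
  filter_upwards [hslln] with ω hω
  have hFn_lip (n : ℕ) : LipschitzWith K (Fn n ω) := by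
    simpa only [← funext (hFn n ω), card_range] using
      LipschitzWith.average (fun j => hlip (X j ω)) (range n)
  exact (LipschitzWith.uniformEquicontinuous _ _ hFn_lip).equicontinuous
    |>.tendstoUniformly_of_tendsto_dense hF_lip.continuous hD_dense hω

/-- On a compact metric space, the empirical Fréchet functions of an i.i.d. sample
from `Q` converge uniformly, almost surely, to the Fréchet function of `Q`. -/
theorem empirical_frechet_function_tendsto_uniformly
    {S : Type*} [MetricSpace S] [CompactSpace S] [MeasurableSpace S] [BorelSpace S]
    {Ω : Type*} [MeasurableSpace Ω] (P : Measure Ω) [IsProbabilityMeasure P]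
    (Q : Measure S) [IsProbabilityMeasure Q]
    (X : ℕ → Ω → S) (hmeas : ∀ n, Measurable (X n))
    (hindep : ProbabilityTheory.iIndepFun X P)
    (hid : ∀ n, Measure.map (X n) P = Q)
    (F : S → ℝ) (hF : ∀ p, F p = ∫ q, dist p q ^ 2 ∂Q)
    (Fn : ℕ → Ω → S → ℝ)
    (hFn : ∀ n ω p, Fn n ω p = (n : ℝ)⁻¹ * ∑ j ∈ Finset.range n, dist p (X j ω) ^ 2) :
    ∀ᵐ ω ∂P, TendstoUniformly (fun n p => Fn n ω p) F atTop :=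
  empirical_frechet_function_tendsto_uniformly_general P Q X hmeas hindep hid F hF Fn hFn
end

section
/- Let (S, ρ) be a metric space with the Heine–Borel property, Q a Borel probability measure with finite Fréchet function, and suppose the Fréchet mean set C(Q) of Q is a singleton {μ}. If μ_n is any measurable selection from the Fréchet mean set of the empirical measure Q_n of an i.i.d. sample from Q, then μ_n → μ almost surely as n → ∞. -/
open MeasureTheory Filter Finset
open scoped ENNReal

lemma sqrt_sum_sq_le {ι : Type*} (s : Finset ι) (a b c : ι → ℝ)
    (hc : ∀ i ∈ s, 0 ≤ c i) (h : ∀ i ∈ s, c i ≤ a i + b i) :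
    Real.sqrt (∑ i ∈ s, c i ^ 2) ≤
      Real.sqrt (∑ i ∈ s, a i ^ 2) + Real.sqrt (∑ i ∈ s, b i ^ 2) := by
  set A := Real.sqrt (∑ i ∈ s, a i ^ 2) with hA
  set B := Real.sqrt (∑ i ∈ s, b i ^ 2) with hB
  have hA0 : 0 ≤ A := Real.sqrt_nonneg _
  have hB0 : 0 ≤ B := Real.sqrt_nonneg _
  have hAsq : A ^ 2 = ∑ i ∈ s, a i ^ 2 :=
    Real.sq_sqrt (Finset.sum_nonneg fun i _ => sq_nonneg _)
  have hBsq : B ^ 2 = ∑ i ∈ s, b i ^ 2 :=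
    Real.sq_sqrt (Finset.sum_nonneg fun i _ => sq_nonneg _)
  have hCS : ∑ i ∈ s, a i * b i ≤ A * B := Real.sum_mul_le_sqrt_mul_sqrt s a b
  have key : ∑ i ∈ s, c i ^ 2 ≤ (A + B) ^ 2 := by
    have h1 : ∑ i ∈ s, c i ^ 2 ≤ ∑ i ∈ s, (a i + b i) ^ 2 :=
      Finset.sum_le_sum fun i hi => pow_le_pow_left₀ (hc i hi) (h i hi) 2
    have h2 : ∑ i ∈ s, (a i + b i) ^ 2
        = ∑ i ∈ s, a i ^ 2 + 2 * ∑ i ∈ s, a i * b i + ∑ i ∈ s, b i ^ 2 := by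
      rw [Finset.mul_sum, ← Finset.sum_add_distrib, ← Finset.sum_add_distrib]
      exact Finset.sum_congr rfl fun i _ => by ring
    nlinarith [hCS, h1, h2]
  calc Real.sqrt (∑ i ∈ s, c i ^ 2) ≤ Real.sqrt ((A + B) ^ 2) := Real.sqrt_le_sqrt key
    _ = A + B := Real.sqrt_sq (by linarith)

lemma frechet_det {S : Type*} [MetricSpace S] [ProperSpace S]
    (x : ℕ → S) (y : ℕ → S) (G : S → ℝ) (μ : S) (D : Set S) (hD : Dense D)
    (hG0 : ∀ p, 0 ≤ G p)
    (hGlip : ∀ p p' : S, Real.sqrt (G p) ≤ Real.sqrt (G p') + dist p p')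
    (hconv : ∀ p ∈ insert μ D,
      Tendsto (fun n => (∑ j ∈ Finset.range n, dist p (x j) ^ 2) / n) atTop (nhds (G p)))
    (hmin : ∀ p : S, (∀ q, G p ≤ G q) → p = μ)
    (hsel : ∀ n, ∀ p : S, ∑ j ∈ Finset.range n, dist (y n) (x j) ^ 2 ≤
      ∑ j ∈ Finset.range n, dist p (x j) ^ 2) :
    Tendsto y atTop (nhds μ) := by
  classical
  set g : ℕ → S → ℝ := fun n p => (∑ j ∈ Finset.range n, dist p (x j) ^ 2) / n with hg
  set h : ℕ → S → ℝ := fun n p => Real.sqrt (g n p) with hh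
  set H : S → ℝ := fun p => Real.sqrt (G p) with hHdef
  have hh0 : ∀ n p, 0 ≤ h n p := fun n p => Real.sqrt_nonneg _
  have hH0 : ∀ p, 0 ≤ H p := fun p => Real.sqrt_nonneg _
  -- selection in terms of h
  have hsel' : ∀ n p, h n (y n) ≤ h n p := by
    intro n p
    apply Real.sqrt_le_sqrt
    simp only [hg, div_eq_mul_inv]
    exact mul_le_mul_of_nonneg_right (hsel n p) (by positivity)
  -- rewrite h via sqrt of sum over sqrt n
  have hrw : ∀ n p, h n p = Real.sqrt (∑ j ∈ Finset.range n, dist p (x j) ^ 2)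
      / Real.sqrt n := by
    intro n p
    simp only [hh, hg]
    rw [Real.sqrt_div (Finset.sum_nonneg fun j _ => sq_nonneg _)]
  have hconst : ∀ (n : ℕ) (d : ℝ), 0 ≤ d →
      Real.sqrt (∑ _j ∈ Finset.range n, d ^ 2) = Real.sqrt n * d := by
    intro n d hd
    rw [Finset.sum_const, Finset.card_range, nsmul_eq_mul, Real.sqrt_mul (Nat.cast_nonneg n),
      Real.sqrt_sq hd]
  -- equi-Lipschitz property of h
  have hlip : ∀ n p p', h n p ≤ h n p' + dist p p' := by
    intro n p p'
    rcases Nat.eq_zero_or_pos n with hn | hn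
    · subst hn
      simp only [hrw]
      simp [Real.sqrt_nonneg, dist_nonneg]

    · have hs : Real.sqrt (∑ j ∈ Finset.range n, dist p (x j) ^ 2) ≤
          Real.sqrt (∑ j ∈ Finset.range n, dist p' (x j) ^ 2) +
          Real.sqrt (∑ _j ∈ Finset.range n, dist p p' ^ 2) := by
        apply sqrt_sum_sq_le _ _ _ _ (fun j _ => dist_nonneg)
        intro j _
        calc dist p (x j) ≤ dist p p' + dist p' (x j) := dist_triangle _ _ _
          _ = dist p' (x j) + dist p p' := by ring
      rw [hconst n _ dist_nonneg] at hs
      have hsn : (0:ℝ) < Real.sqrt n := Real.sqrt_pos.2 (by exact_mod_cast hn)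
      rw [hrw, hrw]
      rw [div_le_iff₀ hsn]
      calc Real.sqrt (∑ j ∈ Finset.range n, dist p (x j) ^ 2)
          ≤ Real.sqrt (∑ j ∈ Finset.range n, dist p' (x j) ^ 2) + Real.sqrt n * dist p p' := hs
        _ = (Real.sqrt (∑ j ∈ Finset.range n, dist p' (x j) ^ 2) / Real.sqrt n + dist p p')
            * Real.sqrt n := by field_simp
  -- lower bound: dist p p' ≤ h n p + h n p' for n ≥ 1
  have hlow : ∀ n, 1 ≤ n → ∀ p p' : S, dist p p' ≤ h n p + h n p' := by
    intro n hn p p'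
    have hs : Real.sqrt (∑ _j ∈ Finset.range n, dist p p' ^ 2) ≤
        Real.sqrt (∑ j ∈ Finset.range n, dist p (x j) ^ 2) +
        Real.sqrt (∑ j ∈ Finset.range n, dist p' (x j) ^ 2) := by
      apply sqrt_sum_sq_le _ _ _ _ (fun j _ => dist_nonneg)
      intro j _
      calc dist p p' ≤ dist p (x j) + dist (x j) p' := dist_triangle _ _ _
        _ = dist p (x j) + dist p' (x j) := by rw [dist_comm (x j) p']
    rw [hconst n _ dist_nonneg] at hs
    have hsn : (0:ℝ) < Real.sqrt n := Real.sqrt_pos.2 (by exact_mod_cast hn)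
    rw [hrw, hrw, ← add_div, le_div_iff₀ hsn]
    linarith [hs]
  -- convergence of h on the dense set
  have hconvD : ∀ p ∈ insert μ D, Tendsto (fun n => h n p) atTop (nhds (H p)) := by
    intro p hp
    exact (hconv p hp).sqrt
  -- convergence of h everywhere
  have hconvAll : ∀ p, Tendsto (fun n => h n p) atTop (nhds (H p)) := by
    intro p
    rw [Metric.tendsto_atTop]
    intro ε hε
    obtain ⟨d, hdD, hdp⟩ := hD.exists_dist_lt p (show (0:ℝ) < ε/4 by linarith)
    have hd := hconvD d (Set.mem_insert_of_mem _ hdD)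
    rw [Metric.tendsto_atTop] at hd
    obtain ⟨N, hN⟩ := hd (ε/4) (by linarith)
    refine ⟨N, fun n hn => ?_⟩
    have h1 : |h n p - h n d| ≤ dist p d := by
      rw [abs_sub_le_iff]
      constructor
      · linarith [hlip n p d]
      · linarith [hlip n d p, dist_comm d p ▸ (rfl : dist d p = dist d p), (dist_comm p d : dist p d = dist d p)]
    have h2 : |H p - H d| ≤ dist p d := by
      rw [abs_sub_le_iff]
      constructor
      · linarith [hGlip p d]
      · have := hGlip d p
        rw [dist_comm d p] at this
        linarith
    have h3 : |h n d - H d| < ε/4 := by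
      have := hN n hn
      rwa [Real.dist_eq] at this
    rw [Real.dist_eq]
    have : |h n p - H p| ≤ |h n p - h n d| + |h n d - H d| + |H d - H p| := by
      have := abs_sub_le (h n p) (h n d) (H p)
      have := abs_sub_le (h n d) (H d) (H p)
      calc |h n p - H p| ≤ |h n p - h n d| + |h n d - H p| := abs_sub_le _ _ _
        _ ≤ |h n p - h n d| + (|h n d - H d| + |H d - H p|) := by
            linarith [abs_sub_le (h n d) (H d) (H p)]
        _ = _ := by ring
    have h2' : |H d - H p| ≤ dist p d := by rwa [abs_sub_comm]
    linarith
  -- main argument by contradiction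
  by_contra hcon
  rw [Metric.tendsto_atTop] at hcon
  push_neg at hcon
  obtain ⟨ε, hε, hfreq⟩ := hcon
  -- boundedness
  have hBnd : ∀ᶠ n in atTop, dist (y n) μ ≤ 2 * H μ + 1 := by
    have h1 : ∀ᶠ n in atTop, h n μ < H μ + 1/2 :=
      (hconvAll μ).eventually_lt_const (by linarith)
    filter_upwards [h1, eventually_ge_atTop 1] with n hn1 hn2
    have := hlow n hn2 (y n) μ
    have := hsel' n μ
    linarith
  have hfreq' : ∃ᶠ n in atTop, ε ≤ dist (y n) μ := frequently_atTop.mpr hfreq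
  set R : ℝ := 2 * H μ + 1 with hR
  obtain ⟨φ, hφmono, hφ⟩ := extraction_of_frequently_atTop (hfreq'.and_eventually hBnd)
  have hmem : ∀ k, y (φ k) ∈ Metric.closedBall μ R := fun k =>
    Metric.mem_closedBall.mpr (hφ k).2
  obtain ⟨pstar, _, ψ, hψmono, hlim⟩ :=
    (isCompact_closedBall μ R).tendsto_subseq hmem
  have hmono : StrictMono (φ ∘ ψ) := hφmono.comp hψmono
  have htop : Tendsto (φ ∘ ψ) atTop atTop := hmono.tendsto_atTop
  have hdist0 : Tendsto (fun k => dist (y (φ (ψ k))) pstar) atTop (nhds 0) :=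
    tendsto_iff_dist_tendsto_zero.mp hlim
  have key : ∀ q, H pstar ≤ H q := by
    intro q
    have l1 : Tendsto (fun k => h (φ (ψ k)) q) atTop (nhds (H q)) :=
      (hconvAll q).comp htop
    have l2 : Tendsto (fun k => h (φ (ψ k)) pstar - dist (y (φ (ψ k))) pstar) atTop
        (nhds (H pstar - 0)) := ((hconvAll pstar).comp htop).sub hdist0
    rw [sub_zero] at l2
    refine le_of_tendsto_of_tendsto' l2 l1 fun k => ?_
    have h1 : h (φ (ψ k)) pstar ≤ h (φ (ψ k)) (y (φ (ψ k))) + dist pstar (y (φ (ψ k))) :=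
      hlip _ _ _
    have h2 : h (φ (ψ k)) (y (φ (ψ k))) ≤ h (φ (ψ k)) q := hsel' _ _
    have h3 : dist pstar (y (φ (ψ k))) = dist (y (φ (ψ k))) pstar := dist_comm _ _
    linarith
  have hpμ : pstar = μ := by
    apply hmin
    intro q
    have := key q
    have h1 : H pstar ^ 2 = G pstar := Real.sq_sqrt (hG0 pstar)
    have h2 : H q ^ 2 = G q := Real.sq_sqrt (hG0 q)
    nlinarith [hH0 pstar, hH0 q]
  -- contradiction: dist (y (φ (ψ k))) μ ≥ ε but tends to 0
  have hεdist : ∀ k, ε ≤ dist (y (φ (ψ k))) μ := fun k => (hφ (ψ k)).1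
  have : Tendsto (fun k => dist (y (φ (ψ k))) μ) atTop (nhds 0) := by
    rw [← hpμ] at *
    exact hdist0
  have : ε ≤ 0 := le_of_tendsto_of_tendsto' tendsto_const_nhds this fun k => hεdist k
  linarith

/-- Consistency of the sample Fréchet mean: on a metric space with the Heine–Borel
property, if the Fréchet mean set of `Q` is the singleton `{μ}`, then any measurable
selection `μ_n` of empirical Fréchet means of an i.i.d. sample from `Q` converges to
`μ` almost surely. -/
theorem sample_frechet_mean_consistent
    {S : Type*} [MetricSpace S] [ProperSpace S] [MeasurableSpace S] [BorelSpace S]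
    {Ω : Type*} [MeasurableSpace Ω] (P : Measure Ω) [IsProbabilityMeasure P]
    (Q : Measure S) [IsProbabilityMeasure Q]
    (X : ℕ → Ω → S) (hmeas : ∀ n, Measurable (X n))
    (hindep : ProbabilityTheory.iIndepFun (m := fun _ => ‹MeasurableSpace S›) X P)
    (hid : ∀ n, Measure.map (X n) P = Q)
    (F : S → ℝ≥0∞)
    (hF : ∀ p, F p = ∫⁻ q, ENNReal.ofReal (dist p q ^ 2) ∂Q)
    (hfin : ∀ p, F p < ⊤)
    (μ : S) (hμ : {p : S | ∀ q, F p ≤ F q} = {μ})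
    (μn : ℕ → Ω → S) (hμnmeas : ∀ n, Measurable (μn n))
    (hsel : ∀ n ω, ∀ p : S,
      ∑ j ∈ Finset.range n, dist (μn n ω) (X j ω) ^ 2 ≤
        ∑ j ∈ Finset.range n, dist p (X j ω) ^ 2) :
    ∀ᵐ ω ∂P, Tendsto (fun n => μn n ω) atTop (nhds μ) := by
  classical
  -- the real-valued Fréchet function
  set G : S → ℝ := fun p => ∫ q, dist p q ^ 2 ∂Q with hG
  have hcont : ∀ p : S, Continuous fun q : S => dist p q ^ 2 := fun p =>
    (continuous_const.dist continuous_id).pow 2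
  have hint : ∀ p : S, Integrable (fun q => dist p q ^ 2) Q := by
    intro p
    refine ⟨(hcont p).aestronglyMeasurable, ?_⟩
    rw [hasFiniteIntegral_iff_norm]
    have : ∀ q : S, ENNReal.ofReal ‖dist p q ^ 2‖ = ENNReal.ofReal (dist p q ^ 2) := by
      intro q; rw [Real.norm_of_nonneg (by positivity)]
    simp_rw [this]
    rw [← hF p]
    exact hfin p
  have hGF : ∀ p, ENNReal.ofReal (G p) = F p := by
    intro p
    rw [hF p, hG]
    exact ofReal_integral_eq_lintegral_ofReal (hint p)
      (Filter.Eventually.of_forall fun q => by positivity)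
  have hG0 : ∀ p, 0 ≤ G p := fun p => integral_nonneg fun q => by positivity
  have hmin : ∀ p : S, (∀ q, G p ≤ G q) → p = μ := by
    intro p hp
    have hmem : p ∈ {p : S | ∀ q, F p ≤ F q} := by
      intro q
      rw [← hGF p, ← hGF q]
      exact ENNReal.ofReal_le_ofReal (hp q)
    rw [hμ] at hmem
    exact hmem
  -- Lipschitz property of sqrt G
  have hdistint : ∀ p : S, Integrable (fun q => dist p q) Q := by
    intro p
    refine Integrable.mono' ((integrable_const 1).add (hint p))
      ((continuous_const.dist continuous_id).aestronglyMeasurable)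
      (Filter.Eventually.of_forall fun q => ?_)
    rw [Real.norm_of_nonneg dist_nonneg]
    simp only [Pi.add_apply]
    nlinarith [dist_nonneg (x := p) (y := q), sq_nonneg (dist p q - 1)]
  have hmean : ∀ p : S, (∫ q, dist p q ∂Q) ≤ Real.sqrt (G p) := by
    intro p
    set m := ∫ q, dist p q ∂Q with hm
    have hm0 : 0 ≤ m := integral_nonneg fun q => dist_nonneg
    have hsq : m ^ 2 ≤ G p := by
      have e1 : ∀ q : S, (dist p q - m) ^ 2 = dist p q ^ 2 - 2 * m * dist p q + m ^ 2 := by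
        intro q; ring
      have hi1 : Integrable (fun q => dist p q ^ 2 - 2 * m * dist p q) Q :=
        (hint p).sub ((hdistint p).const_mul (2 * m))
      have e2 : ∫ q, (dist p q - m) ^ 2 ∂Q = G p - 2 * m * m + m ^ 2 := by
        simp_rw [e1]
        rw [integral_add hi1 (integrable_const _),
          integral_sub (hint p) ((hdistint p).const_mul (2 * m)),
          integral_const_mul, integral_const, probReal_univ]
        simp [hG, hm]
      have e3 : 0 ≤ ∫ q, (dist p q - m) ^ 2 ∂Q := integral_nonneg fun q => sq_nonneg _
      nlinarith
    calc m = Real.sqrt (m ^ 2) := (Real.sqrt_sq hm0).symm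
      _ ≤ Real.sqrt (G p) := Real.sqrt_le_sqrt hsq
  have hGlip : ∀ p p' : S, Real.sqrt (G p) ≤ Real.sqrt (G p') + dist p p' := by
    intro p p'
    set d := dist p p' with hd
    have hd0 : 0 ≤ d := dist_nonneg
    have hexp : (fun q : S => (dist p' q + d) ^ 2)
        = fun q => dist p' q ^ 2 + (2 * d) * dist p' q + d ^ 2 :=
      funext fun q => by ring
    have hi2 : Integrable (fun q : S => (dist p' q + d) ^ 2) Q := by
      rw [hexp]
      exact ((hint p').add ((hdistint p').const_mul (2 * d))).add (integrable_const _)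
    have step1 : G p ≤ ∫ q, (dist p' q + d) ^ 2 ∂Q := by
      apply integral_mono (hint p) hi2
      intro q
      have : dist p q ≤ dist p' q + d := by
        rw [hd, dist_comm p p']
        calc dist p q ≤ dist p p' + dist p' q := dist_triangle _ _ _
          _ = dist p' q + dist p' p := by rw [dist_comm p p']; ring
      exact pow_le_pow_left₀ dist_nonneg this 2
    have step2 : ∫ q, (dist p' q + d) ^ 2 ∂Q
        = G p' + (2 * d) * (∫ q, dist p' q ∂Q) + d ^ 2 := by
      have hi3 : Integrable (fun q : S => dist p' q ^ 2 + (2 * d) * dist p' q) Q :=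
        (hint p').add ((hdistint p').const_mul (2 * d))
      rw [hexp, integral_add hi3 (integrable_const _),
        integral_add (hint p') ((hdistint p').const_mul (2 * d)),
        integral_const_mul, integral_const, probReal_univ]
      simp [hG]
    have step3 : G p ≤ (Real.sqrt (G p') + d) ^ 2 := by
      have hs := hmean p'
      have hss : Real.sqrt (G p') ^ 2 = G p' := Real.sq_sqrt (hG0 p')
      nlinarith [step1, step2, Real.sqrt_nonneg (G p')]
    calc Real.sqrt (G p) ≤ Real.sqrt ((Real.sqrt (G p') + d) ^ 2) := Real.sqrt_le_sqrt step3
      _ = Real.sqrt (G p') + d := Real.sqrt_sq (by positivity)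
  -- strong law of large numbers for each fixed point
  have hae : ∀ p : S, ∀ᵐ ω ∂P,
      Tendsto (fun n => (∑ j ∈ Finset.range n, dist p (X j ω) ^ 2) / n) atTop (nhds (G p)) := by
    intro p
    set Y : ℕ → Ω → ℝ := fun j ω => dist p (X j ω) ^ 2 with hY
    have hfm : Measurable fun q : S => dist p q ^ 2 := (hcont p).measurable
    have hident : ∀ i, ProbabilityTheory.IdentDistrib (Y i) (Y 0) P P := by
      intro i
      have hXi : ProbabilityTheory.IdentDistrib (X i) (X 0) P P :=
        ⟨(hmeas i).aemeasurable, (hmeas 0).aemeasurable, by rw [hid i, hid 0]⟩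
      exact hXi.comp hfm
    have hindep' : Pairwise (Function.onFun (ProbabilityTheory.IndepFun · · P) Y) := by
      intro i j hij
      exact (hindep.indepFun hij).comp hfm hfm
    have hYint : Integrable (Y 0) P := by
      have h1 : Integrable (fun q => dist p q ^ 2) (Measure.map (X 0) P) := by
        rw [hid 0]; exact hint p
      exact (integrable_map_measure (hcont p).aestronglyMeasurable
        (hmeas 0).aemeasurable).mp h1
    have hEY : G p = ∫ ω, Y 0 ω ∂P := by
      rw [show G p = ∫ q, dist p q ^ 2 ∂Q from rfl, ← hid 0,
        integral_map (hmeas 0).aemeasurable (hcont p).aestronglyMeasurable]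
    have hslln := ProbabilityTheory.strong_law_ae_real Y hYint hindep' hident
    filter_upwards [hslln] with ω hω
    rw [← hEY] at hω
    exact hω
  -- intersect over a countable dense set
  obtain ⟨D, hDc, hDd⟩ := TopologicalSpace.exists_countable_dense S
  have hae2 : ∀ᵐ ω ∂P, ∀ p ∈ insert μ D,
      Tendsto (fun n => (∑ j ∈ Finset.range n, dist p (X j ω) ^ 2) / n) atTop (nhds (G p)) := by
    rw [ae_ball_iff (hDc.insert μ)]
    intro p _
    exact hae p
  filter_upwards [hae2] with ω hω
  exact frechet_det (fun j => X j ω) (fun n => μn n ω) G μ D hDd hG0 hGlip hω hmin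
    (fun n p => hsel n ω p)
end

section
/- Let J : M → ℝ^N be a closed embedding of a differentiable manifold M, and Q a probability measure on M whose Fréchet function with respect to the extrinsic distance ρ_J(p,q) = |J(p) − J(q)| is finite. Then the extrinsic Fréchet mean of Q exists (i.e., the Fréchet function has a unique minimizer) if and only if there is a unique point of J(M) closest in Euclidean distance to the mean m = ∫ J dQ, and in that case the extrinsic mean is J^{-1} of that closest point. -/
/-!
By the variance decomposition `∫ ‖c - y‖² = ‖c - m‖² + ∫ ‖m - y‖²` at `c = J p`, the Fréchet
function is `F p = ‖J p - m‖² + const`. Minimizing `F` over `M` is therefore minimizing the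
distance to `m` over `J(M)`, and since `J` is injective, unique minimizers on either side
correspond to each other.
-/

open MeasureTheory Manifold

open scoped RealInnerProductSpace

section VarianceDecomposition

variable {α V : Type*} [MeasurableSpace α] [NormedAddCommGroup V] [InnerProductSpace ℝ V]
  {μ : Measure α} {f : α → V}

theorem norm_sub_sq_eq_norm_sub_sq_add_inner_add_norm_sub_sq (c m y : V) :
    ‖c - y‖ ^ 2 = ‖c - m‖ ^ 2 + 2 * ⟪c - m, m - y⟫ + ‖m - y‖ ^ 2 := by
  rw [← norm_add_sq_real, sub_add_sub_cancel]

theorem integrable_norm_sub_sq_of_integrable_norm_sub_sq [IsFiniteMeasure μ]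
    (hf : Integrable f μ) {c : V} (hc : Integrable (fun x ↦ ‖c - f x‖ ^ 2) μ) (c' : V) :
    Integrable (fun x ↦ ‖c' - f x‖ ^ 2) μ := by
  rw [funext fun x ↦ norm_sub_sq_eq_norm_sub_sq_add_inner_add_norm_sub_sq c' c (f x)]
  exact ((integrable_const _).add
    (((integrable_const c).sub hf).const_inner (c' - c) |>.const_mul 2)).add hc

variable [CompleteSpace V] [IsProbabilityMeasure μ]

/-- The cross term vanishes because `∫ (∫ f - f x) ∂μ = 0`. -/
theorem integral_norm_sub_sq_eq (hf : Integrable f μ) (c : V)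
    (hc : Integrable (fun x ↦ ‖c - f x‖ ^ 2) μ) :
    ∫ x, ‖c - f x‖ ^ 2 ∂μ = ‖c - ∫ x, f x ∂μ‖ ^ 2 + ∫ x, ‖(∫ y, f y ∂μ) - f x‖ ^ 2 ∂μ := by
  set m := ∫ x, f x ∂μ
  have hdev : Integrable (fun x ↦ m - f x) μ := (integrable_const m).sub hf
  have hcross : Integrable (fun x ↦ 2 * ⟪c - m, m - f x⟫) μ :=
    (hdev.const_inner (c - m)).const_mul 2
  have hconst_cross : Integrable (fun x ↦ ‖c - m‖ ^ 2 + 2 * ⟪c - m, m - f x⟫) μ :=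
    (integrable_const _).add hcross
  have hcross_zero : ∫ x, ⟪c - m, m - f x⟫ ∂μ = 0 := by
    rw [integral_inner hdev, integral_sub (integrable_const m) hf, integral_const,
      probReal_univ, one_smul, sub_self, inner_zero_right]
  rw [funext fun x ↦ norm_sub_sq_eq_norm_sub_sq_add_inner_add_norm_sub_sq c m (f x),
    integral_add hconst_cross
      (integrable_norm_sub_sq_of_integrable_norm_sub_sq hf hc m),
    integral_add (integrable_const _) hcross, integral_const, probReal_univ, one_smul,
    integral_const_mul, hcross_zero, mul_zero, add_zero]

end VarianceDecomposition

theorem Function.Injective.existsUnique_forall_le_comp_iff {α β γ : Type*} [Preorder γ]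
    {J : α → β} (hJ : Function.Injective J) (d : β → γ) :
    (∃! p, ∀ p', d (J p) ≤ d (J p')) ↔
      ∃! y, y ∈ Set.range J ∧ ∀ y' ∈ Set.range J, d y ≤ d y' := by
  simp only [Set.forall_mem_range]
  constructor
  · rintro ⟨p, hp, hp_unique⟩
    refine ⟨J p, ⟨⟨p, rfl⟩, hp⟩, ?_⟩
    rintro _ ⟨⟨p', rfl⟩, hp'⟩
    rw [hp_unique p' hp']
  · rintro ⟨_, ⟨⟨p, rfl⟩, hp⟩, hp_unique⟩
    exact ⟨p, hp, fun p' hp' ↦ hJ (hp_unique (J p') ⟨⟨p', rfl⟩, hp'⟩)⟩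

theorem extrinsic_frechet_mean_iff_unique_projection_general
    {M : Type*} [TopologicalSpace M] [MeasurableSpace M]
    {N : ℕ} (J : M → EuclideanSpace ℝ (Fin N))
    (hJclosed : Topology.IsClosedEmbedding J)
    (Q : Measure M) [IsProbabilityMeasure Q]
    (hintJ : Integrable J Q)
    (hFfin : ∀ p : M, Integrable (fun q => ‖J p - J q‖ ^ 2) Q)
    (m : EuclideanSpace ℝ (Fin N)) (hm : m = ∫ q, J q ∂Q)
    (F : M → ℝ) (hF : ∀ p, F p = ∫ q, ‖J p - J q‖ ^ 2 ∂Q) :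
    ((∃! p : M, ∀ p' : M, F p ≤ F p') ↔
      (∃! y : EuclideanSpace ℝ (Fin N), y ∈ Set.range J ∧
        ∀ y' ∈ Set.range J, ‖y - m‖ ≤ ‖y' - m‖)) ∧
    (∀ p : M, (∀ p' : M, F p ≤ F p') →
      ∀ y' ∈ Set.range J, ‖J p - m‖ ≤ ‖y' - m‖) := by
  have hF_eq : ∀ p, F p = ‖J p - m‖ ^ 2 + ∫ q, ‖m - J q‖ ^ 2 ∂Q := fun p ↦ by
    rw [hF, hm, integral_norm_sub_sq_eq hintJ (J p) (hFfin p)]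
  have hF_le : ∀ p p', F p ≤ F p' ↔ ‖J p - m‖ ≤ ‖J p' - m‖ := fun p p' ↦ by
    rw [hF_eq, hF_eq, add_le_add_iff_right, sq_le_sq₀ (norm_nonneg _) (norm_nonneg _)]
  simp only [hF_le]
  exact ⟨hJclosed.injective.existsUnique_forall_le_comp_iff (‖· - m‖),
    fun p hp ↦ Set.forall_mem_range.mpr hp⟩

/-- Extrinsic Fréchet mean via a closed embedding: the extrinsic Fréchet mean of `Q`
exists (unique minimizer of the Fréchet function for the extrinsic distance) iff there
is a unique point of `J(M)` closest to the Euclidean mean `m` of `Q ∘ J⁻¹`; moreover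
any minimizer `p` maps under `J` to a closest point to `m` in `J(M)`. -/
theorem extrinsic_frechet_mean_iff_unique_projection
    {E H M : Type*} [NormedAddCommGroup E] [NormedSpace ℝ E]
    [TopologicalSpace H] (I : ModelWithCorners ℝ E H)
    [TopologicalSpace M] [ChartedSpace H M] [IsManifold I (⊤ : ℕ∞) M]
    [MeasurableSpace M] [BorelSpace M]
    {N : ℕ} (J : M → EuclideanSpace ℝ (Fin N))
    (hJsmooth : ContMDiff I 𝓘(ℝ, EuclideanSpace ℝ (Fin N)) (⊤ : ℕ∞) J)
    (hJclosed : Topology.IsClosedEmbedding J)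
    (hJimm : ∀ p : M, Function.Injective (mfderiv I 𝓘(ℝ, EuclideanSpace ℝ (Fin N)) J p))
    (Q : Measure M) [IsProbabilityMeasure Q]
    (hintJ : Integrable J Q)
    (hFfin : ∀ p : M, Integrable (fun q => ‖J p - J q‖ ^ 2) Q)
    (m : EuclideanSpace ℝ (Fin N)) (hm : m = ∫ q, J q ∂Q)
    (F : M → ℝ) (hF : ∀ p, F p = ∫ q, ‖J p - J q‖ ^ 2 ∂Q) :
    ((∃! p : M, ∀ p' : M, F p ≤ F p') ↔
      (∃! y : EuclideanSpace ℝ (Fin N), y ∈ Set.range J ∧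
        ∀ y' ∈ Set.range J, ‖y - m‖ ≤ ‖y' - m‖)) ∧
    (∀ p : M, (∀ p' : M, F p ≤ F p') →
      ∀ y' ∈ Set.range J, ‖J p - m‖ ≤ ‖y' - m‖) :=
  extrinsic_frechet_mean_iff_unique_projection_general J hJclosed Q hintJ hFfin m hm F hF
end

section
/- Let Q be the uniform probability measure on the equator {(x₁, x₂, 0) : x₁² + x₂² = 1} of S². Then the set of minimizers of the intrinsic Fréchet function F(p) = ∫ ρ_g²(p,q) Q(dq), where ρ_g is the geodesic distance on S², is exactly the two poles {(0,0,1), (0,0,−1)}. -/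
/-!
Since `arccos (-t) = π - arccos t`, the pairing of the antipodal equatorial points `q` and `-q`
gives `arccos ⟪p, q⟫ ^ 2 + arccos ⟪p, -q⟫ ^ 2 = 2 (arccos ⟪p, q⟫ - π / 2) ^ 2 + π ^ 2 / 2`.
Hence the Fréchet function is `π ^ 2 / 4` plus the mean of `(arccos ⟪p, q⟫ - π / 2) ^ 2`, which
vanishes exactly when `p` is orthogonal to the whole equator, i.e. at the two poles.
-/

open MeasureTheory Real

lemma Real.arccos_sq_add_arccos_neg_sq (t : ℝ) :
    arccos t ^ 2 + arccos (-t) ^ 2 = 2 * (arccos t - π / 2) ^ 2 + π ^ 2 / 2 := by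
  rw [arccos_neg]
  ring

lemma integral_arccos_sq_of_antiperiodic {f : ℝ → ℝ} {c : ℝ} (hf : Continuous f)
    (hanti : Function.Antiperiodic f c) :
    ∫ θ in 0..2 * c, arccos (f θ) ^ 2
      = c * π ^ 2 / 2 + ∫ θ in 0..2 * c, (arccos (f θ) - π / 2) ^ 2 := by
  set h : ℝ → ℝ := fun θ => arccos (f θ) ^ 2
  have hcont : Continuous h := (continuous_arccos.comp hf).pow 2
  have hshift : ∫ θ in 0..2 * c, h (θ + c) = ∫ θ in 0..2 * c, h θ := by
    have hper : Function.Periodic h (2 * c) := fun θ => by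
      simp only [h, hanti.periodic_two_mul θ]
    rw [intervalIntegral.integral_comp_add_right, zero_add, add_comm]
    simpa only [zero_add] using hper.intervalIntegral_add_eq c 0
  have hpair : ∀ θ, h θ + h (θ + c) = 2 * (arccos (f θ) - π / 2) ^ 2 + π ^ 2 / 2 := fun θ => by
    simp only [h, hanti θ, arccos_sq_add_arccos_neg_sq]
  have hsq : Continuous fun θ => (arccos (f θ) - π / 2) ^ 2 :=
    ((continuous_arccos.comp hf).sub continuous_const).pow 2
  have hsum : ∫ θ in 0..2 * c, (h θ + h (θ + c))
      = 2 * (∫ θ in 0..2 * c, (arccos (f θ) - π / 2) ^ 2) + 2 * c * (π ^ 2 / 2) := by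
    simp only [hpair]
    rw [intervalIntegral.integral_add ((hsq.const_mul 2).intervalIntegrable _ _)
      intervalIntegrable_const, intervalIntegral.integral_const_mul,
      intervalIntegral.integral_const, sub_zero, smul_eq_mul]
  have hshift_int : IntervalIntegrable (fun θ => h (θ + c)) volume 0 (2 * c) :=
    (hcont.comp (continuous_add_const c)).intervalIntegrable _ _
  rw [intervalIntegral.integral_add (hcont.intervalIntegrable _ _) hshift_int, hshift] at hsum
  linarith

lemma intervalIntegral_arccos_sub_pi_div_two_sq_eq_zero_iff {f : ℝ → ℝ} (hf : Continuous f)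
    {a b : ℝ} (hab : a < b) :
    ∫ θ in a..b, (arccos (f θ) - π / 2) ^ 2 = 0 ↔ ∀ θ ∈ Set.Icc a b, f θ = 0 := by
  constructor
  · intro hzero
    by_contra! ⟨θ₀, hθ₀, hne⟩
    have hlt := intervalIntegral.integral_lt_integral_of_continuousOn_of_le_of_exists_lt hab
      continuousOn_const
      (((continuous_arccos.comp hf).sub continuous_const).pow 2).continuousOn
      (fun θ _ => sq_nonneg _)
      ⟨θ₀, hθ₀, sq_pos_of_ne_zero (sub_ne_zero.mpr (mt arccos_eq_pi_div_two.mp hne))⟩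
    simp [hzero] at hlt
  · intro hvanish
    rw [intervalIntegral.integral_congr (g := fun _ => 0), intervalIntegral.integral_zero]
    intro θ hθ
    simp [hvanish θ (by rwa [Set.uIcc_of_le hab.le] at hθ), arccos_zero]

lemma integral_map_smul_restrict_Ico {X : Type*} [MeasurableSpace X] {γ : ℝ → X}
    (hγ : Measurable γ) {g : X → ℝ} (hg : Measurable g) {T : ℝ} (hT : 0 ≤ T) :
    ∫ x, g x ∂(Measure.map γ ((ENNReal.ofReal T)⁻¹ • volume.restrict (Set.Ico 0 T)))
      = T⁻¹ * ∫ θ in 0..T, g (γ θ) := by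
  rw [integral_map hγ.aemeasurable hg.aestronglyMeasurable, integral_smul_measure,
    ENNReal.toReal_inv, ENNReal.toReal_ofReal hT, smul_eq_mul, intervalIntegral.integral_of_le hT,
    integral_Ico_eq_integral_Ioo, integral_Ioc_eq_integral_Ioo]

lemma EuclideanSpace.inner_cos_sin_zero (p : EuclideanSpace ℝ (Fin 3)) (θ : ℝ) :
    inner ℝ p !₂[cos θ, sin θ, 0] = p 0 * cos θ + p 1 * sin θ := by
  simp [PiLp.inner_apply, Fin.sum_univ_three, mul_comm]

lemma integral_arccos_inner_sq_equator (p : EuclideanSpace ℝ (Fin 3)) :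
    ∫ x, arccos (inner ℝ p x) ^ 2
      ∂(Measure.map (fun θ : ℝ => (!₂[cos θ, sin θ, 0] : EuclideanSpace ℝ (Fin 3)))
        ((ENNReal.ofReal (2 * π))⁻¹ • volume.restrict (Set.Ico 0 (2 * π))))
      = π ^ 2 / 4 + (2 * π)⁻¹ *
          ∫ θ in 0..2 * π, (arccos (p 0 * cos θ + p 1 * sin θ) - π / 2) ^ 2 := by
  have hγ : Continuous fun θ : ℝ => (!₂[cos θ, sin θ, 0] : EuclideanSpace ℝ (Fin 3)) := by
    fun_prop
  have hanti : Function.Antiperiodic (fun θ => p 0 * cos θ + p 1 * sin θ) π := fun θ => by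
    simp only [cos_add_pi, sin_add_pi]
    ring
  have hg : Continuous fun x : EuclideanSpace ℝ (Fin 3) => arccos (inner ℝ p x) ^ 2 := by
    fun_prop
  rw [integral_map_smul_restrict_Ico hγ.measurable hg.measurable two_pi_pos.le]
  simp only [EuclideanSpace.inner_cos_sin_zero]
  rw [integral_arccos_sq_of_antiperiodic (by fun_prop) hanti]
  field_simp
  ring

lemma EuclideanSpace.mem_sphere_zero_one_iff (p : EuclideanSpace ℝ (Fin 3)) :
    p ∈ Metric.sphere 0 1 ↔ p 0 ^ 2 + p 1 ^ 2 + p 2 ^ 2 = 1 := by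
  rw [mem_sphere_zero_iff_norm, ← pow_eq_one_iff_of_nonneg (norm_nonneg p) two_ne_zero,
    EuclideanSpace.real_norm_sq_eq, Fin.sum_univ_three]

lemma EuclideanSpace.mem_sphere_and_eq_zero_and_eq_zero_iff (p : EuclideanSpace ℝ (Fin 3)) :
    (p ∈ Metric.sphere 0 1 ∧ p 0 = 0 ∧ p 1 = 0) ↔ p = !₂[0, 0, 1] ∨ p = !₂[0, 0, -1] := by
  rw [mem_sphere_zero_one_iff]
  constructor
  · rintro ⟨hsum, h0, h1⟩
    have : (p 2 - 1) * (p 2 + 1) = 0 := by rw [h0, h1] at hsum; linear_combination hsum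
    rcases mul_eq_zero.mp this with h2 | h2
    · left; ext i; fin_cases i <;> simp [h0, h1, sub_eq_zero.mp h2]
    · right; ext i; fin_cases i <;> simp [h0, h1, eq_neg_of_add_eq_zero_left h2]
  · rintro (rfl | rfl) <;> simp [Matrix.cons_val]

/-- For the uniform distribution on the equator of `S²`, the minimizers of the
intrinsic Fréchet function are exactly the north and south poles. -/
theorem intrinsic_frechet_minimizers_equator
    (Q : Measure (EuclideanSpace ℝ (Fin 3)))
    (hQ : Q = Measure.map
      (fun θ : ℝ => (!₂[Real.cos θ, Real.sin θ, 0] : EuclideanSpace ℝ (Fin 3)))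
      ((ENNReal.ofReal (2 * Real.pi))⁻¹ • volume.restrict (Set.Ico 0 (2 * Real.pi))))
    (F : EuclideanSpace ℝ (Fin 3) → ℝ)
    (hF : ∀ p, F p = ∫ x, Real.arccos (inner ℝ p x : ℝ) ^ 2 ∂Q) :
    {p | p ∈ Metric.sphere (0 : EuclideanSpace ℝ (Fin 3)) 1 ∧
        ∀ q ∈ Metric.sphere (0 : EuclideanSpace ℝ (Fin 3)) 1, F p ≤ F q} =
      {(!₂[0, 0, 1] : EuclideanSpace ℝ (Fin 3)),
       (!₂[0, 0, -1] : EuclideanSpace ℝ (Fin 3))} := by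
  set D : EuclideanSpace ℝ (Fin 3) → ℝ :=
    fun p => ∫ θ in 0..2 * π, (arccos (p 0 * cos θ + p 1 * sin θ) - π / 2) ^ 2
  have hF_le : ∀ p q, F p ≤ F q ↔ D p ≤ D q := fun p q => by
    simp only [hF, hQ, integral_arccos_inner_sq_equator, add_le_add_iff_left]
    exact mul_le_mul_iff_right₀ (by positivity)
  have hD_nonneg : ∀ p, 0 ≤ D p := fun p =>
    intervalIntegral.integral_nonneg two_pi_pos.le fun _ _ => sq_nonneg _
  have hD_eq_zero : ∀ p, D p = 0 ↔ p 0 = 0 ∧ p 1 = 0 := fun p => by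
    rw [intervalIntegral_arccos_sub_pi_div_two_sq_eq_zero_iff (by fun_prop) two_pi_pos]
    refine ⟨fun h => ?_, fun ⟨h0, h1⟩ θ _ => by simp [h0, h1]⟩
    simpa using And.intro (h 0 ⟨le_rfl, two_pi_pos.le⟩)
      (h (π / 2) ⟨by positivity, by linarith [pi_pos]⟩)
  obtain ⟨hnorth, hD_north⟩ : (!₂[0, 0, 1] : EuclideanSpace ℝ (Fin 3)) ∈ Metric.sphere 0 1 ∧
      D !₂[0, 0, 1] = 0 := by
    rw [hD_eq_zero]
    exact (EuclideanSpace.mem_sphere_and_eq_zero_and_eq_zero_iff _).mpr (Or.inl rfl)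
  ext p
  rw [Set.mem_insert_iff, Set.mem_singleton_iff,
    ← EuclideanSpace.mem_sphere_and_eq_zero_and_eq_zero_iff, ← hD_eq_zero]
  simp only [Set.mem_ofPred_eq, hF_le]
  constructor
  · rintro ⟨hp, hmin⟩
    exact ⟨hp, le_antisymm (hD_north ▸ hmin _ hnorth) (hD_nonneg p)⟩
  · rintro ⟨hp, hp_zero⟩
    exact ⟨hp, fun q _ => hp_zero ▸ hD_nonneg q⟩
end

section
/- Let μ̃ be a symmetric k×k real matrix with eigenvalues λ₁ ≥ … ≥ λ_k and corresponding orthonormal eigenvectors U₁,…,U_k, and let m < k with λ_m > λ_{m+1}. Then among all matrices of the form A = Σ_{j=1}^m (d_j + 1/m) U_j' U_j'ᵀ with appropriate trace normalization—specifically among matrices p'p where p is an m×k real matrix of rank m and Frobenius norm 1—the unique closest point in Frobenius norm to μ̃ is A = Σ_{j=1}^m (λ_j − λ̄ + 1/m) U_j U_jᵀ, where λ̄ = (λ₁+…+λ_m)/m. -/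
open Matrix

namespace RSP

/-- telescoping -/
lemma tele (d : ℕ → ℝ) (k i : ℕ) (hik : i ≤ k) (hk : d k = 0) :
    ∑ a ∈ Finset.Ico i k, (d a - d (a + 1)) = d i := by
  have : ∑ a ∈ Finset.Ico i k, (d a - d (a + 1)) = d i - d k := by
    rw [Finset.sum_Ico_eq_sum_range]
    have h2 := Finset.sum_range_sub' (fun j => d (i + j)) (k - i)
    simp only [← add_assoc] at h2
    rw [h2, Nat.add_zero, Nat.add_sub_cancel' hik]
  rw [this, hk, sub_zero]

lemma filter_le_range (k a : ℕ) (ha : a < k) :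
    (Finset.range k).filter (fun i => i ≤ a) = Finset.range (a + 1) := by
  ext i; simp; omega

lemma filter_ge_range (k i : ℕ) :
    (Finset.range k).filter (fun a => i ≤ a) = Finset.Ico i k := by
  ext a; simp; omega

lemma sum_range_ite (k a : ℕ) (ha : a < k) (f : ℕ → ℝ) :
    ∑ i ∈ Finset.range k, (if i ≤ a then f i else 0) = ∑ i ∈ Finset.range (a + 1), f i := by
  rw [← Finset.sum_filter, filter_le_range k a ha]

lemma sum_ite_ge (k i : ℕ) (f : ℕ → ℝ) :
    ∑ a ∈ Finset.range k, (if i ≤ a then f a else 0) = ∑ a ∈ Finset.Ico i k, f a := by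
  rw [← Finset.sum_filter, filter_ge_range]

lemma cnt_eq (k a b : ℕ) (ha : a < k) (hb : b < k) :
    ∑ j ∈ Finset.range k, (if j ≤ a then (1:ℝ) else 0) * (if j ≤ b then (1:ℝ) else 0)
      = (min a b : ℝ) + 1 := by
  have : ∀ j, ((if j ≤ a then (1:ℝ) else 0) * (if j ≤ b then (1:ℝ) else 0))
      = if j ≤ min a b then (1:ℝ) else 0 := by
    intro j; by_cases h1 : j ≤ a <;> by_cases h2 : j ≤ b <;> simp [h1, h2, le_min_iff] <;> omega
  rw [Finset.sum_congr rfl (fun j _ => this j), ← Finset.sum_filter,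
    filter_le_range k (min a b) (lt_of_le_of_lt (min_le_left a b) ha)]
  simp

lemma swap_master (k : ℕ) (α β : ℕ → ℝ) (W : ℕ → ℕ → ℝ) :
    ∑ a ∈ Finset.range k, ∑ b ∈ Finset.range k, α a * β b *
        (∑ i ∈ Finset.range k, ∑ j ∈ Finset.range k,
          (if i ≤ a then (1:ℝ) else 0) * (if j ≤ b then (1:ℝ) else 0) * W i j)
      = ∑ i ∈ Finset.range k, ∑ j ∈ Finset.range k,
          (∑ a ∈ Finset.Ico i k, α a) * (∑ b ∈ Finset.Ico j k, β b) * W i j := by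
  have h1 : ∀ a b, α a * β b *
        (∑ i ∈ Finset.range k, ∑ j ∈ Finset.range k,
          (if i ≤ a then (1:ℝ) else 0) * (if j ≤ b then (1:ℝ) else 0) * W i j)
      = ∑ i ∈ Finset.range k, ∑ j ∈ Finset.range k,
          (if i ≤ a then α a else 0) * ((if j ≤ b then β b else 0) * W i j) := by
    intro a b
    rw [Finset.mul_sum]
    refine Finset.sum_congr rfl fun i _ => ?_
    rw [Finset.mul_sum]
    refine Finset.sum_congr rfl fun j _ => ?_
    split_ifs <;> ring
  have h2 : ∀ i j, ∑ a ∈ Finset.range k, ∑ b ∈ Finset.range k,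
          (if i ≤ a then α a else 0) * ((if j ≤ b then β b else 0) * W i j)
      = (∑ a ∈ Finset.Ico i k, α a) * (∑ b ∈ Finset.Ico j k, β b) * W i j := by
    intro i j
    rw [← sum_ite_ge k i α, ← sum_ite_ge k j β, Finset.sum_mul, Finset.sum_mul]
    refine Finset.sum_congr rfl fun a _ => ?_
    rw [Finset.mul_sum, Finset.sum_mul]
    exact Finset.sum_congr rfl fun b _ => by ring
  calc ∑ a ∈ Finset.range k, ∑ b ∈ Finset.range k, α a * β b *
        (∑ i ∈ Finset.range k, ∑ j ∈ Finset.range k,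
          (if i ≤ a then (1:ℝ) else 0) * (if j ≤ b then (1:ℝ) else 0) * W i j)
      = ∑ a ∈ Finset.range k, ∑ b ∈ Finset.range k, ∑ i ∈ Finset.range k,
          ∑ j ∈ Finset.range k,
          (if i ≤ a then α a else 0) * ((if j ≤ b then β b else 0) * W i j) :=
        Finset.sum_congr rfl fun a _ => Finset.sum_congr rfl fun b _ => h1 a b
    _ = ∑ a ∈ Finset.range k, ∑ i ∈ Finset.range k, ∑ b ∈ Finset.range k,
          ∑ j ∈ Finset.range k,
          (if i ≤ a then α a else 0) * ((if j ≤ b then β b else 0) * W i j) :=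
        Finset.sum_congr rfl fun a _ => Finset.sum_comm
    _ = ∑ i ∈ Finset.range k, ∑ a ∈ Finset.range k, ∑ b ∈ Finset.range k,
          ∑ j ∈ Finset.range k,
          (if i ≤ a then α a else 0) * ((if j ≤ b then β b else 0) * W i j) :=
        Finset.sum_comm
    _ = ∑ i ∈ Finset.range k, ∑ a ∈ Finset.range k, ∑ j ∈ Finset.range k,
          ∑ b ∈ Finset.range k,
          (if i ≤ a then α a else 0) * ((if j ≤ b then β b else 0) * W i j) :=
        Finset.sum_congr rfl fun i _ => Finset.sum_congr rfl fun a _ => Finset.sum_comm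
    _ = ∑ i ∈ Finset.range k, ∑ j ∈ Finset.range k, ∑ a ∈ Finset.range k,
          ∑ b ∈ Finset.range k,
          (if i ≤ a then α a else 0) * ((if j ≤ b then β b else 0) * W i j) :=
        Finset.sum_congr rfl fun i _ => Finset.sum_comm
    _ = ∑ i ∈ Finset.range k, ∑ j ∈ Finset.range k,
          (∑ a ∈ Finset.Ico i k, α a) * (∑ b ∈ Finset.Ico j k, β b) * W i j :=
        Finset.sum_congr rfl fun i _ => Finset.sum_congr rfl fun j _ => h2 i j

lemma core_identity (k : ℕ) (d l : ℕ → ℝ) (S : ℕ → ℕ → ℝ) (hd : d k = 0) (hl : l k = 0) :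
    ∑ a ∈ Finset.range k, ∑ b ∈ Finset.range k,
      (d a - d (a + 1)) * (l b - l (b + 1)) *
        (((min a b : ℝ) + 1) - ∑ i ∈ Finset.range (a + 1), ∑ j ∈ Finset.range (b + 1), S i j)
    = (∑ j ∈ Finset.range k, d j * l j)
      - ∑ i ∈ Finset.range k, ∑ j ∈ Finset.range k, S i j * (d i * l j) := by
  set α : ℕ → ℝ := fun a => d a - d (a + 1) with hα
  set β : ℕ → ℝ := fun b => l b - l (b + 1) with hβ
  have cnt2 : ∀ a ∈ Finset.range k, ∀ b ∈ Finset.range k, ((min a b : ℝ) + 1)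
      = ∑ i ∈ Finset.range k, ∑ j ∈ Finset.range k,
        (if i ≤ a then (1:ℝ) else 0) * (if j ≤ b then (1:ℝ) else 0) *
          (if i = j then (1:ℝ) else 0) := by
    intro a ha b hb
    rw [← cnt_eq k a b (Finset.mem_range.mp ha) (Finset.mem_range.mp hb)]
    refine Finset.sum_congr rfl fun i hi => ?_
    rw [Finset.sum_eq_single i]
    · simp
    · intro j _ hji
      simp [Ne.symm hji]
    · intro h; exact absurd hi h
  have pit : ∀ a ∈ Finset.range k, ∀ b ∈ Finset.range k,
      (∑ i ∈ Finset.range (a + 1), ∑ j ∈ Finset.range (b + 1), S i j)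
      = ∑ i ∈ Finset.range k, ∑ j ∈ Finset.range k,
        (if i ≤ a then (1:ℝ) else 0) * (if j ≤ b then (1:ℝ) else 0) * S i j := by
    intro a ha b hb
    have hinner : ∀ i, ∑ j ∈ Finset.range k,
        (if i ≤ a then (1:ℝ) else 0) * (if j ≤ b then (1:ℝ) else 0) * S i j
        = if i ≤ a then (∑ j ∈ Finset.range (b + 1), S i j) else 0 := by
      intro i
      by_cases hia : i ≤ a
      · simp only [hia, if_true, one_mul]
        rw [← sum_range_ite k b (Finset.mem_range.mp hb) (fun j => S i j)]
        exact Finset.sum_congr rfl fun j _ => by split_ifs <;> ring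
      · simp [hia]
    rw [Finset.sum_congr rfl (fun i _ => hinner i),
      sum_range_ite k a (Finset.mem_range.mp ha)]
  have split : ∀ a ∈ Finset.range k, ∀ b ∈ Finset.range k,
      α a * β b * (((min a b : ℝ) + 1)
          - ∑ i ∈ Finset.range (a + 1), ∑ j ∈ Finset.range (b + 1), S i j)
      = α a * β b * (∑ i ∈ Finset.range k, ∑ j ∈ Finset.range k,
            (if i ≤ a then (1:ℝ) else 0) * (if j ≤ b then (1:ℝ) else 0) *
              (if i = j then (1:ℝ) else 0))
        - α a * β b * (∑ i ∈ Finset.range k, ∑ j ∈ Finset.range k,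
            (if i ≤ a then (1:ℝ) else 0) * (if j ≤ b then (1:ℝ) else 0) * S i j) := by
    intro a ha b hb
    rw [← cnt2 a ha b hb, ← pit a ha b hb, mul_sub]
  calc ∑ a ∈ Finset.range k, ∑ b ∈ Finset.range k, α a * β b *
        (((min a b : ℝ) + 1)
          - ∑ i ∈ Finset.range (a + 1), ∑ j ∈ Finset.range (b + 1), S i j)
      = (∑ a ∈ Finset.range k, ∑ b ∈ Finset.range k, α a * β b *
          (∑ i ∈ Finset.range k, ∑ j ∈ Finset.range k,
            (if i ≤ a then (1:ℝ) else 0) * (if j ≤ b then (1:ℝ) else 0) *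
              (if i = j then (1:ℝ) else 0)))
        - ∑ a ∈ Finset.range k, ∑ b ∈ Finset.range k, α a * β b *
          (∑ i ∈ Finset.range k, ∑ j ∈ Finset.range k,
            (if i ≤ a then (1:ℝ) else 0) * (if j ≤ b then (1:ℝ) else 0) * S i j) := by
        rw [← Finset.sum_sub_distrib]
        refine Finset.sum_congr rfl fun a ha => ?_
        rw [← Finset.sum_sub_distrib]
        exact Finset.sum_congr rfl fun b hb => split a ha b hb
    _ = (∑ j ∈ Finset.range k, d j * l j)
        - ∑ i ∈ Finset.range k, ∑ j ∈ Finset.range k, S i j * (d i * l j) := by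
        rw [swap_master, swap_master]
        congr 1
        · -- delta collapse
          have : ∀ i ∈ Finset.range k, ∑ j ∈ Finset.range k,
              (∑ a ∈ Finset.Ico i k, α a) * (∑ b ∈ Finset.Ico j k, β b) *
                (if i = j then (1:ℝ) else 0)
              = d i * l i := by
            intro i hi
            rw [Finset.sum_eq_single i]
            · rw [tele d k i (le_of_lt (Finset.mem_range.mp hi)) hd,
                tele l k i (le_of_lt (Finset.mem_range.mp hi)) hl]
              simp
            · intro j _ hji; simp [Ne.symm hji]
            · intro h; exact absurd hi h
          rw [Finset.sum_congr rfl this]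
        · refine Finset.sum_congr rfl fun i hi => Finset.sum_congr rfl fun j hj => ?_
          rw [tele d k i (le_of_lt (Finset.mem_range.mp hi)) hd,
            tele l k j (le_of_lt (Finset.mem_range.mp hj)) hl]
          ring

lemma P_le (k a b : ℕ) (S : ℕ → ℕ → ℝ) (ha : a < k) (hb : b < k)
    (hS0 : ∀ i j, 0 ≤ S i j)
    (hrow : ∀ i, i < k → ∑ j ∈ Finset.range k, S i j = 1)
    (hcol : ∀ j, j < k → ∑ i ∈ Finset.range k, S i j = 1) :
    ∑ i ∈ Finset.range (a + 1), ∑ j ∈ Finset.range (b + 1), S i j ≤ (min a b : ℝ) + 1 := by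
  have hrowb : ∀ (S' : ℕ → ℕ → ℝ), (∀ i j, 0 ≤ S' i j) →
      (∀ i, i < k → ∑ j ∈ Finset.range k, S' i j = 1) →
      ∀ a b : ℕ, a < k → b < k →
      ∑ i ∈ Finset.range (a + 1), ∑ j ∈ Finset.range (b + 1), S' i j ≤ (a : ℝ) + 1 := by
    intro S' h0 hr a b hak hbk
    calc ∑ i ∈ Finset.range (a + 1), ∑ j ∈ Finset.range (b + 1), S' i j
        ≤ ∑ _i ∈ Finset.range (a + 1), (1:ℝ) := by
          refine Finset.sum_le_sum fun i hi => ?_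
          rw [← hr i (lt_of_le_of_lt (Nat.lt_succ_iff.mp (Finset.mem_range.mp hi)) hak)]
          exact Finset.sum_le_sum_of_subset_of_nonneg
            (Finset.range_subset_range.mpr hbk) (fun j _ _ => h0 i j)
      _ = (a : ℝ) + 1 := by simp
  have h1 := hrowb S hS0 hrow a b ha hb
  have h2 : ∑ i ∈ Finset.range (a + 1), ∑ j ∈ Finset.range (b + 1), S i j ≤ (b : ℝ) + 1 := by
    rw [Finset.sum_comm]
    exact hrowb (fun j i => S i j) (fun j i => hS0 i j) hcol b a hb ha
  rcases le_total a b with h | h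
  · rw [min_eq_left (by exact_mod_cast h : (a:ℝ) ≤ (b:ℝ))]; exact h1
  · rw [min_eq_right (by exact_mod_cast h : (b:ℝ) ≤ (a:ℝ))]; exact h2

lemma quad {k : ℕ} (c1 c2 : Fin k → ℝ) (e1 e2 : Fin k → Fin k → ℝ) :
    ∑ a : Fin k, ∑ b : Fin k,
      (∑ i, c1 i * (e1 i a * e1 i b)) * (∑ j, c2 j * (e2 j a * e2 j b))
    = ∑ i, ∑ j, c1 i * c2 j * (dotProduct (e1 i) (e2 j))^2 := by
  have h2 : ∀ i j, (∑ a : Fin k, ∑ b : Fin k,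
      (c1 i * (e1 i a * e1 i b)) * (c2 j * (e2 j a * e2 j b)))
      = c1 i * c2 j * (dotProduct (e1 i) (e2 j))^2 := by
    intro i j
    have : (dotProduct (e1 i) (e2 j))^2
        = ∑ a : Fin k, ∑ b : Fin k, (e1 i a * e2 j a) * (e1 i b * e2 j b) := by
      rw [sq, dotProduct, Finset.sum_mul_sum]
    rw [this, Finset.mul_sum]
    refine Finset.sum_congr rfl fun a _ => ?_
    rw [Finset.mul_sum]
    refine Finset.sum_congr rfl fun b _ => ?_
    ring
  calc ∑ a : Fin k, ∑ b : Fin k,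
      (∑ i, c1 i * (e1 i a * e1 i b)) * (∑ j, c2 j * (e2 j a * e2 j b))
      = ∑ a : Fin k, ∑ b : Fin k, ∑ i, ∑ j,
          (c1 i * (e1 i a * e1 i b)) * (c2 j * (e2 j a * e2 j b)) :=
        Finset.sum_congr rfl fun a _ => Finset.sum_congr rfl fun b _ =>
          Finset.sum_mul_sum _ _ _ _
    _ = ∑ a : Fin k, ∑ i, ∑ b : Fin k, ∑ j,
          (c1 i * (e1 i a * e1 i b)) * (c2 j * (e2 j a * e2 j b)) :=
        Finset.sum_congr rfl fun a _ => Finset.sum_comm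
    _ = ∑ i, ∑ a : Fin k, ∑ b : Fin k, ∑ j,
          (c1 i * (e1 i a * e1 i b)) * (c2 j * (e2 j a * e2 j b)) :=
        Finset.sum_comm
    _ = ∑ i, ∑ a : Fin k, ∑ j, ∑ b : Fin k,
          (c1 i * (e1 i a * e1 i b)) * (c2 j * (e2 j a * e2 j b)) :=
        Finset.sum_congr rfl fun i _ => Finset.sum_congr rfl fun a _ => Finset.sum_comm
    _ = ∑ i, ∑ j, ∑ a : Fin k, ∑ b : Fin k,
          (c1 i * (e1 i a * e1 i b)) * (c2 j * (e2 j a * e2 j b)) :=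
        Finset.sum_congr rfl fun i _ => Finset.sum_comm
    _ = ∑ i, ∑ j, c1 i * c2 j * (dotProduct (e1 i) (e2 j))^2 :=
        Finset.sum_congr rfl fun i _ => Finset.sum_congr rfl fun j _ => h2 i j

lemma quad_diag {k : ℕ} (c1 c2 : Fin k → ℝ) (e1 : Fin k → Fin k → ℝ)
    (h : ∀ i j, dotProduct (e1 i) (e1 j) = if i = j then (1:ℝ) else 0) :
    ∑ i, ∑ j, c1 i * c2 j * (dotProduct (e1 i) (e1 j))^2 = ∑ i, c1 i * c2 i := by
  refine Finset.sum_congr rfl fun i _ => ?_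
  rw [Finset.sum_eq_single i]
  · rw [h i i]; simp
  · intro j _ hji; rw [h i j, if_neg (Ne.symm hji)]; ring
  · intro hi; exact absurd (Finset.mem_univ i) hi

lemma pars {k : ℕ} (w : Fin k → ℝ) (e : Fin k → Fin k → ℝ)
    (h2 : ∀ a b, (∑ j, e j a * e j b) = if a = b then (1:ℝ) else 0) :
    ∑ j, (dotProduct w (e j))^2 = dotProduct w w := by
  have h3 : ∀ j, (dotProduct w (e j))^2
      = ∑ a : Fin k, ∑ b : Fin k, (w a * w b) * (e j a * e j b) := by
    intro j
    rw [sq, dotProduct, Finset.sum_mul_sum]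
    exact Finset.sum_congr rfl fun a _ => Finset.sum_congr rfl fun b _ => by ring
  rw [Finset.sum_congr rfl fun j _ => h3 j, Finset.sum_comm]
  rw [dotProduct]
  refine Finset.sum_congr rfl fun a _ => ?_
  rw [Finset.sum_comm]
  have : ∀ b : Fin k, (∑ j, (w a * w b) * (e j a * e j b))
      = (w a * w b) * (if a = b then (1:ℝ) else 0) := by
    intro b
    rw [← h2 a b, Finset.mul_sum]
  rw [Finset.sum_congr rfl fun b _ => this b, Finset.sum_eq_single a]
  · simp
  · intro b _ hba; rw [if_neg (Ne.symm hba)]; ring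
  · intro ha; exact absurd (Finset.mem_univ a) ha

lemma sub_sq_expand {k : ℕ} (X Y : Fin k → Fin k → ℝ) :
    ∑ a : Fin k, ∑ b : Fin k, (X a b - Y a b)^2
    = (∑ a : Fin k, ∑ b : Fin k, X a b * X a b)
      - 2 * (∑ a : Fin k, ∑ b : Fin k, X a b * Y a b)
      + ∑ a : Fin k, ∑ b : Fin k, Y a b * Y a b := by
  rw [Finset.mul_sum, ← Finset.sum_sub_distrib, ← Finset.sum_add_distrib]
  refine Finset.sum_congr rfl fun a _ => ?_
  rw [Finset.mul_sum, ← Finset.sum_sub_distrib, ← Finset.sum_add_distrib]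
  exact Finset.sum_congr rfl fun b _ => by ring

lemma sub_sq_expand1 (s : Finset ℕ) (f g : ℕ → ℝ) :
    ∑ j ∈ s, (f j - g j)^2
    = (∑ j ∈ s, f j * f j) - 2 * (∑ j ∈ s, f j * g j) + ∑ j ∈ s, g j * g j := by
  have h : ∀ j, (f j - g j)^2 = f j * f j - 2 * (f j * g j) + g j * g j := fun j => by ring
  rw [Finset.sum_congr rfl fun j _ => h j, Finset.sum_add_distrib, Finset.sum_sub_distrib,
    Finset.mul_sum]

lemma sum_mul_expand (s : Finset ℕ) (f g h : ℕ → ℝ) :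
    ∑ j ∈ s, (f j - g j) * (h j - g j)
    = (∑ j ∈ s, f j * h j) - (∑ j ∈ s, f j * g j) - (∑ j ∈ s, g j * h j)
      + ∑ j ∈ s, g j * g j := by
  have hh : ∀ j, (f j - g j) * (h j - g j)
      = f j * h j - f j * g j - g j * h j + g j * g j := fun j => by ring
  rw [Finset.sum_congr rfl fun j _ => hh j, Finset.sum_add_distrib, Finset.sum_sub_distrib,
    Finset.sum_sub_distrib]

lemma dF_formula {k : ℕ} (c1 c2 : Fin k → ℝ) (e1 e2 : Fin k → Fin k → ℝ)
    (h1 : ∀ i j, dotProduct (e1 i) (e1 j) = if i = j then (1:ℝ) else 0)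
    (h2 : ∀ i j, dotProduct (e2 i) (e2 j) = if i = j then (1:ℝ) else 0) :
    ∑ a : Fin k, ∑ b : Fin k,
      ((∑ i, c1 i * (e1 i a * e1 i b)) - (∑ j, c2 j * (e2 j a * e2 j b)))^2
    = (∑ i, c1 i * c1 i) + (∑ j, c2 j * c2 j)
      - 2 * ∑ i, ∑ j, c1 i * c2 j * (dotProduct (e1 i) (e2 j))^2 := by
  have e := sub_sq_expand (k := k) (fun a b => ∑ i, c1 i * (e1 i a * e1 i b))
      (fun a b => ∑ j, c2 j * (e2 j a * e2 j b))
  rw [e, quad c1 c1 e1 e1, quad c1 c2 e1 e2, quad c2 c2 e2 e2,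
    quad_diag c1 c1 e1 h1, quad_diag c2 c2 e2 h2]
  ring

end RSP

open RSP

/-- Projection for the reflection-shape embedding: for a symmetric positive
semidefinite matrix `μ` of trace one (the mean of embedded shapes) whose `m`-th and
`(m+1)`-th eigenvalues are distinct, the unique closest point (Frobenius norm) to `μ`
among matrices `pᵀp` with `p` an `m×k` real matrix of rank `m` and Frobenius norm one
is `A = Σ_{j<m} (λ_j − λ̄ + 1/m) U_j U_jᵀ`. -/
theorem reflection_shape_projection
    {k m : ℕ} (hm : 0 < m) (hmk : m < k)
    (μ : Matrix (Fin k) (Fin k) ℝ) (hsym : μ.IsSymm) (hpsd : μ.PosSemidef)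
    (htr : μ.trace = 1)
    (lam : Fin k → ℝ) (U : Fin k → Fin k → ℝ)
    (heig : ∀ j, μ.mulVec (U j) = lam j • U j)
    (horth : ∀ i j, dotProduct (U i) (U j) = if i = j then (1 : ℝ) else 0)
    (hanti : ∀ i j : Fin k, i ≤ j → lam j ≤ lam i)
    (hgap : ∀ i j : Fin k, (i : ℕ) < m → m ≤ (j : ℕ) → lam j < lam i)
    (lbar : ℝ)
    (hlbar : lbar = (∑ j ∈ Finset.univ.filter fun j : Fin k => (j : ℕ) < m, lam j) / m)
    (A : Matrix (Fin k) (Fin k) ℝ)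
    (hA : A = ∑ j ∈ Finset.univ.filter fun j : Fin k => (j : ℕ) < m,
      (lam j - lbar + 1 / m) • vecMulVec (U j) (U j))
    (Sset : Set (Matrix (Fin k) (Fin k) ℝ))
    (hS : Sset = {B | ∃ p : Matrix (Fin m) (Fin k) ℝ,
      p.rank = m ∧ (∑ i, ∑ j, p i j ^ 2) = 1 ∧ B = pᵀ * p})
    (dF : Matrix (Fin k) (Fin k) ℝ → Matrix (Fin k) (Fin k) ℝ → ℝ)
    (hdF : ∀ B C, dF B C = ∑ i, ∑ j, (B i j - C i j) ^ 2) :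
    A ∈ Sset ∧ (∀ B ∈ Sset, dF A μ ≤ dF B μ) ∧
      (∀ B ∈ Sset, dF B μ = dF A μ → B = A) := by
  classical
  have hmR : (0:ℝ) < m := by exact_mod_cast hm
  set F : Finset (Fin k) := Finset.univ.filter (fun j : Fin k => (j : ℕ) < m) with hF
  -- orthonormal-basis facts for U
  have hU2 : ∀ a b : Fin k, (∑ j, U j a * U j b) = if a = b then (1:ℝ) else 0 := by
    have hGG : (Matrix.of U) * (Matrix.of U)ᵀ = 1 := by
      ext i j
      have := horth i j
      simpa [Matrix.mul_apply, Matrix.transpose_apply, Matrix.one_apply,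
        dotProduct] using this
    have hGG2 := mul_eq_one_comm.mp hGG
    intro a b
    have h := congrFun (congrFun hGG2 a) b
    simpa [Matrix.mul_apply, Matrix.transpose_apply, Matrix.one_apply] using h
  -- entrywise expansion of μ
  have hmu : ∀ a b, μ a b = ∑ j, lam j * (U j a * U j b) := by
    intro a b
    have h1 : μ a b = ∑ x, μ a x * (if x = b then (1:ℝ) else 0) := by simp
    rw [h1]
    calc ∑ x, μ a x * (if x = b then (1:ℝ) else 0)
        = ∑ x, μ a x * ∑ j, U j x * U j b :=
          Finset.sum_congr rfl fun x _ => by rw [hU2 x b]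
      _ = ∑ x, ∑ j, μ a x * (U j x * U j b) :=
          Finset.sum_congr rfl fun x _ => by
            rw [Finset.mul_sum]
      _ = ∑ j, ∑ x, μ a x * (U j x * U j b) := Finset.sum_comm
      _ = ∑ j, lam j * (U j a * U j b) := by
          refine Finset.sum_congr rfl fun j _ => ?_
          have h2 : ∑ x, μ a x * U j x = lam j * U j a := by
            have h3 := congrFun (heig j) a
            simpa [Matrix.mulVec, dotProduct] using h3
          calc ∑ x, μ a x * (U j x * U j b) = (∑ x, μ a x * U j x) * U j b := by
                rw [Finset.sum_mul]
                exact Finset.sum_congr rfl fun x _ => by ring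
            _ = lam j * (U j a * U j b) := by rw [h2]; ring
  have hUU : ∀ j, dotProduct (U j) (U j) = 1 := by
    intro j; rw [horth j j]; simp
  have hlam_nonneg : ∀ j, 0 ≤ lam j := by
    intro j
    have h := hpsd.dotProduct_mulVec_nonneg (U j)
    rw [heig j] at h
    have : dotProduct (star (U j)) (lam j • U j) = lam j := by
      simp [dotProduct_smul, hUU j]
    rw [this] at h; exact h
  have hsum_lam : (∑ j, lam j) = 1 := by
    have h1 : μ.trace = ∑ j, lam j := by
      rw [Matrix.trace]
      calc ∑ a, μ.diag a = ∑ a, ∑ j, lam j * (U j a * U j a) :=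
            Finset.sum_congr rfl fun a _ => hmu a a
        _ = ∑ j, ∑ a, lam j * (U j a * U j a) := Finset.sum_comm
        _ = ∑ j, lam j := by
            refine Finset.sum_congr rfl fun j _ => ?_
            rw [← Finset.mul_sum]
            have : (∑ a, U j a * U j a) = 1 := hUU j
            rw [this, mul_one]
    rw [← h1, htr]
  have hjm : (⟨m, hmk⟩ : Fin k).val = m := rfl
  have hlam_pos : ∀ j : Fin k, (j : ℕ) < m → 0 < lam j := by
    intro j hj
    exact lt_of_le_of_lt (hlam_nonneg ⟨m, hmk⟩) (hgap j ⟨m, hmk⟩ hj (le_of_eq hjm.symm))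
  have hFsum : ∀ f : Fin k → ℝ, ∑ j ∈ F, f j = ∑ i : Fin m, f (Fin.castLE hmk.le i) := by
    intro f
    refine Finset.sum_bij' (fun j hj => (⟨j.1, (Finset.mem_filter.mp hj).2⟩ : Fin m))
      (fun i _ => Fin.castLE hmk.le i) ?_ ?_ ?_ ?_ ?_
    · intro a ha; exact Finset.mem_univ _
    · intro i _
      simp only [hF, Finset.mem_filter, Finset.mem_univ, true_and]
      exact i.2
    · intro a ha; rfl
    · intro i _; rfl
    · intro a ha; rfl
  have hcardF : (F.card : ℝ) = m := by
    have : F.card = m := by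
      have h1 : ∑ j ∈ F, (1:ℝ) = ∑ i : Fin m, (1:ℝ) := hFsum (fun _ => 1)
      rw [Finset.sum_const, Finset.sum_const, Finset.card_univ, Fintype.card_fin,
        nsmul_eq_mul, nsmul_eq_mul, mul_one, mul_one] at h1
      exact_mod_cast h1
    exact_mod_cast this
  have hlbar_le : lbar ≤ 1 / m := by
    have h1 : (∑ j ∈ F, lam j) ≤ 1 := by
      rw [← hsum_lam]
      exact Finset.sum_le_sum_of_subset_of_nonneg (Finset.subset_univ F)
        (fun j _ _ => hlam_nonneg j)
    rw [hlbar, div_le_div_iff₀ hmR hmR]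
    calc (∑ j ∈ F, lam j) * m ≤ 1 * m := by
          exact mul_le_mul_of_nonneg_right h1 (le_of_lt hmR)
      _ = 1 * m := rfl
  set c : Fin k → ℝ := fun j => if (j : ℕ) < m then lam j - lbar + 1 / m else 0 with hcdef
  have hc_ge : ∀ j : Fin k, (j : ℕ) < m → lam j ≤ c j := by
    intro j hj
    simp only [hcdef, if_pos hj]
    linarith [hlbar_le]
  have hc_pos : ∀ j : Fin k, (j : ℕ) < m → 0 < c j :=
    fun j hj => lt_of_lt_of_le (hlam_pos j hj) (hc_ge j hj)
  have hc_zero : ∀ j : Fin k, m ≤ (j : ℕ) → c j = 0 := by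
    intro j hj; simp only [hcdef, if_neg (not_lt.mpr hj)]
  have hc_sum : (∑ j, c j) = 1 := by
    have h1 : (∑ j, c j) = ∑ j ∈ F, (lam j - lbar + 1 / m) := by
      rw [← Finset.sum_filter]
    rw [h1, Finset.sum_add_distrib, Finset.sum_sub_distrib, Finset.sum_const,
      Finset.sum_const, nsmul_eq_mul, nsmul_eq_mul]
    have h2 : (F.card : ℝ) * lbar = ∑ j ∈ F, lam j := by
      rw [hcardF, hlbar]
      field_simp
    rw [h2, hcardF]
    field_simp
    ring
  -- entrywise expansion of A
  have hAe : ∀ a b, A a b = ∑ j, c j * (U j a * U j b) := by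
    intro a b
    have h1 : A a b = ∑ j ∈ F, (lam j - lbar + 1 / m) * (U j a * U j b) := by
      rw [hA]
      rw [Matrix.sum_apply]
      refine Finset.sum_congr rfl fun j _ => ?_
      simp [Matrix.vecMulVec_apply, mul_assoc]
    rw [h1]
    rw [show (∑ j, c j * (U j a * U j b))
        = ∑ j ∈ F, (lam j - lbar + 1 / m) * (U j a * U j b) by
      rw [← Finset.sum_filter_add_sum_filter_not Finset.univ (fun j : Fin k => (j:ℕ) < m)]
      have hz : ∑ j ∈ Finset.univ.filter (fun j : Fin k => ¬ (j:ℕ) < m),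
          c j * (U j a * U j b) = 0 := by
        refine Finset.sum_eq_zero fun j hj => ?_
        have := (Finset.mem_filter.mp hj).2
        rw [hc_zero j (not_lt.mp this)]; ring
      rw [hz, add_zero]
      refine Finset.sum_congr rfl fun j hj => ?_
      have := (Finset.mem_filter.mp hj).2
      simp only [hcdef, if_pos this]]
  have hcast : ∀ i : Fin m, ((Fin.castLE hmk.le i : Fin k) : ℕ) < m := fun i => i.isLt
  -- membership of A in Sset
  have hAmem : A ∈ Sset := by
    rw [hS]
    refine ⟨Matrix.of fun i a => Real.sqrt (c (Fin.castLE hmk.le i)) * U (Fin.castLE hmk.le i) a,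
      ?_, ?_, ?_⟩
    · -- rank
      set p : Matrix (Fin m) (Fin k) ℝ :=
        Matrix.of fun i a => Real.sqrt (c (Fin.castLE hmk.le i)) * U (Fin.castLE hmk.le i) a
        with hp
      have hdiag : p * pᵀ = Matrix.diagonal (fun i : Fin m => c (Fin.castLE hmk.le i)) := by
        ext i i'
        simp only [Matrix.mul_apply, Matrix.transpose_apply, hp, Matrix.of_apply,
          Matrix.diagonal_apply]
        have : ∀ a, Real.sqrt (c (Fin.castLE hmk.le i)) * U (Fin.castLE hmk.le i) a *
            (Real.sqrt (c (Fin.castLE hmk.le i')) * U (Fin.castLE hmk.le i') a)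
            = (Real.sqrt (c (Fin.castLE hmk.le i)) * Real.sqrt (c (Fin.castLE hmk.le i'))) *
              (U (Fin.castLE hmk.le i) a * U (Fin.castLE hmk.le i') a) := fun a => by ring
        rw [Finset.sum_congr rfl fun a _ => this a, ← Finset.mul_sum]
        have horth2 : (∑ a, U (Fin.castLE hmk.le i) a * U (Fin.castLE hmk.le i') a)
            = if i = i' then (1:ℝ) else 0 := by
          have h := horth (Fin.castLE hmk.le i) (Fin.castLE hmk.le i')
          rw [dotProduct] at h
          rw [h]
          by_cases hii : i = i'
          · simp [hii]
          · rw [if_neg hii, if_neg]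
            intro hcc
            exact hii (Fin.castLE_injective hmk.le hcc)
        rw [horth2]
        by_cases hii : i = i'
        · subst hii
          rw [if_pos rfl, if_pos rfl, mul_one,
            Real.mul_self_sqrt (le_of_lt (hc_pos _ (hcast i)))]
        · rw [if_neg hii, if_neg hii, mul_zero]
      have hrk : p.rank = (p * pᵀ).rank := (Matrix.rank_self_mul_transpose p).symm
      rw [hrk, hdiag, Matrix.rank_diagonal]
      rw [Fintype.card_congr (Equiv.subtypeUnivEquiv
        (fun i : Fin m => ne_of_gt (hc_pos _ (hcast i))))]
      exact Fintype.card_fin m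
    · -- Frobenius norm one
      have : ∀ i : Fin m, (∑ a, (Real.sqrt (c (Fin.castLE hmk.le i)) *
          U (Fin.castLE hmk.le i) a) ^ 2) = c (Fin.castLE hmk.le i) := by
        intro i
        have h1 : ∀ a, (Real.sqrt (c (Fin.castLE hmk.le i)) * U (Fin.castLE hmk.le i) a) ^ 2
            = c (Fin.castLE hmk.le i) *
              (U (Fin.castLE hmk.le i) a * U (Fin.castLE hmk.le i) a) := by
          intro a
          rw [mul_pow, sq, sq, Real.mul_self_sqrt (le_of_lt (hc_pos _ (hcast i)))]
        rw [Finset.sum_congr rfl fun a _ => h1 a, ← Finset.mul_sum]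
        have := hUU (Fin.castLE hmk.le i)
        rw [dotProduct] at this
        rw [this, mul_one]
      calc ∑ i : Fin m, ∑ a, (Matrix.of fun i a =>
            Real.sqrt (c (Fin.castLE hmk.le i)) * U (Fin.castLE hmk.le i) a) i a ^ 2
          = ∑ i : Fin m, c (Fin.castLE hmk.le i) :=
            Finset.sum_congr rfl fun i _ => this i
        _ = ∑ j ∈ F, c j := (hFsum c).symm
        _ = ∑ j, c j := by
            rw [← Finset.sum_filter_add_sum_filter_not Finset.univ
              (fun j : Fin k => (j:ℕ) < m) c]
            have hz : ∑ j ∈ Finset.univ.filter (fun j : Fin k => ¬ (j:ℕ) < m), c j = 0 :=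
              Finset.sum_eq_zero fun j hj =>
                hc_zero j (not_lt.mp (Finset.mem_filter.mp hj).2)
            rw [hz, add_zero]
        _ = 1 := hc_sum
    · -- pᵀ * p = A
      ext a b
      rw [Matrix.mul_apply]
      have h1 : ∀ i : Fin m, (Matrix.of fun i a =>
            Real.sqrt (c (Fin.castLE hmk.le i)) * U (Fin.castLE hmk.le i) a)ᵀ a i *
          (Matrix.of fun i a =>
            Real.sqrt (c (Fin.castLE hmk.le i)) * U (Fin.castLE hmk.le i) a) i b
          = c (Fin.castLE hmk.le i) * (U (Fin.castLE hmk.le i) a *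
              U (Fin.castLE hmk.le i) b) := by
        intro i
        simp only [Matrix.transpose_apply, Matrix.of_apply]
        have hss := Real.mul_self_sqrt (le_of_lt (hc_pos (Fin.castLE hmk.le i) (hcast i)))
        calc Real.sqrt (c (Fin.castLE hmk.le i)) * U (Fin.castLE hmk.le i) a *
              (Real.sqrt (c (Fin.castLE hmk.le i)) * U (Fin.castLE hmk.le i) b)
            = (Real.sqrt (c (Fin.castLE hmk.le i)) * Real.sqrt (c (Fin.castLE hmk.le i))) *
              (U (Fin.castLE hmk.le i) a * U (Fin.castLE hmk.le i) b) := by ring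
          _ = c (Fin.castLE hmk.le i) * (U (Fin.castLE hmk.le i) a *
              U (Fin.castLE hmk.le i) b) := by rw [hss]
      rw [Finset.sum_congr rfl fun i _ => h1 i]
      rw [show (∑ i : Fin m, c (Fin.castLE hmk.le i) * (U (Fin.castLE hmk.le i) a *
            U (Fin.castLE hmk.le i) b))
          = ∑ j ∈ F, c j * (U j a * U j b) from
        (hFsum (fun j => c j * (U j a * U j b))).symm]
      rw [hAe a b]
      rw [← Finset.sum_filter_add_sum_filter_not Finset.univ
        (fun j : Fin k => (j:ℕ) < m) (fun j => c j * (U j a * U j b))]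
      have hz : ∑ j ∈ Finset.univ.filter (fun j : Fin k => ¬ (j:ℕ) < m),
          c j * (U j a * U j b) = 0 :=
        Finset.sum_eq_zero fun j hj => by
          rw [hc_zero j (not_lt.mp (Finset.mem_filter.mp hj).2)]; ring
      rw [hz, add_zero]
  -- main analysis for arbitrary B in Sset
  have main : ∀ B ∈ Sset, dF A μ ≤ dF B μ ∧ (dF B μ = dF A μ → B = A) := by
    intro B hB
    rw [hS] at hB
    obtain ⟨q, hqrank, hqfrob, hBdef⟩ := hB
    have hqT : qᴴ = qᵀ := by
      ext i j; simp [Matrix.conjTranspose_apply]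
    have hBpsd : B.PosSemidef := by
      rw [hBdef, ← hqT]
      exact Matrix.posSemidef_conjTranspose_mul_self q
    have hH : B.IsHermitian := hBpsd.1
    set d0 : Fin k → ℝ := hH.eigenvalues with hd0def
    set V : Matrix (Fin k) (Fin k) ℝ :=
      (Matrix.IsHermitian.eigenvectorUnitary hH : Matrix (Fin k) (Fin k) ℝ) with hVdef
    have hV1 : V * star V = 1 :=
      Matrix.mem_unitaryGroup_iff.mp (Matrix.IsHermitian.eigenvectorUnitary hH).2
    have hV2 : star V * V = 1 :=
      Matrix.mem_unitaryGroup_iff'.mp (Matrix.IsHermitian.eigenvectorUnitary hH).2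
    have hBd : ∀ a b, B a b = ∑ i, d0 i * (V a i * V b i) := by
      intro a b
      have hspec := hH.spectral_theorem
      rw [RCLike.ofReal_real_eq_id] at hspec
      have h1 : B a b = ((V * Matrix.diagonal (id ∘ d0)) * star V) a b := by
        rw [hspec, Unitary.conjStarAlgAut_apply]
      rw [h1, Matrix.mul_apply]
      refine Finset.sum_congr rfl fun i _ => ?_
      rw [Matrix.mul_diagonal]
      simp only [Function.comp, id, Matrix.star_apply, star_trivial]
      ring
    have hd0nn : ∀ i, 0 ≤ d0 i := fun i => hBpsd.eigenvalues_nonneg i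
    -- orthonormality of eigenvector columns
    have hVo : ∀ i j : Fin k, (∑ a, V a i * V a j) = if i = j then (1:ℝ) else 0 := by
      intro i j
      have h := congrFun (congrFun hV2 i) j
      simpa [Matrix.mul_apply, Matrix.star_apply, star_trivial, Matrix.one_apply] using h
    have hVcol : ∀ a b : Fin k, (∑ i, V a i * V b i) = if a = b then (1:ℝ) else 0 := by
      intro a b
      have h := congrFun (congrFun hV1 a) b
      simpa [Matrix.mul_apply, Matrix.star_apply, star_trivial, Matrix.one_apply] using h
    -- trace of B equals 1
    have htrB : (∑ i, d0 i) = 1 := by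
      have h1 : (∑ a, B a a) = ∑ i, d0 i := by
        calc ∑ a, B a a = ∑ a, ∑ i, d0 i * (V a i * V a i) :=
              Finset.sum_congr rfl fun a _ => hBd a a
          _ = ∑ i, ∑ a, d0 i * (V a i * V a i) := Finset.sum_comm
          _ = ∑ i, d0 i := by
              refine Finset.sum_congr rfl fun i _ => ?_
              rw [← Finset.mul_sum, hVo i i, if_pos rfl, mul_one]
      have h2 : (∑ a, B a a) = 1 := by
        calc ∑ a, B a a = ∑ a, ∑ x, q x a * q x a := by
              refine Finset.sum_congr rfl fun a _ => ?_
              rw [hBdef, Matrix.mul_apply]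
              exact Finset.sum_congr rfl fun x _ => rfl
          _ = ∑ x, ∑ a, q x a * q x a := Finset.sum_comm
          _ = 1 := by
              rw [← hqfrob]
              exact Finset.sum_congr rfl fun x _ =>
                Finset.sum_congr rfl fun a _ => (sq (q x a)) ▸ (sq (q x a)).symm ▸ rfl
      rw [← h1, h2]
    -- rank of B equals m
    have hrkB : Fintype.card {i // d0 i ≠ 0} = m := by
      have h1 : B.rank = m := by
        rw [hBdef, Matrix.rank_transpose_mul_self, hqrank]
      rw [← hH.rank_eq_card_non_zero_eigs, h1]
    -- sort eigenvalues in decreasing order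
    set σ : Equiv.Perm (Fin k) := Tuple.sort (fun i => -d0 i) with hσ
    set dd : Fin k → ℝ := fun i => d0 (σ i) with hdd
    set vv : Fin k → Fin k → ℝ := fun i a => V a (σ i) with hvv
    have hdd_anti : ∀ i j : Fin k, i ≤ j → dd j ≤ dd i := by
      intro i j hij
      have h := Tuple.monotone_sort (fun i => -d0 i) hij
      simp only [Function.comp] at h
      have : -(d0 (σ i)) ≤ -(d0 (σ j)) := h
      simp only [hdd]
      linarith
    have hdd_nn : ∀ i, 0 ≤ dd i := fun i => hd0nn (σ i)
    have hBd2 : ∀ a b, B a b = ∑ i, dd i * (vv i a * vv i b) := by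
      intro a b
      rw [hBd a b, ← Equiv.sum_comp σ (fun i => d0 i * (V a i * V b i))]
    have hvvo : ∀ i j, (∑ a, vv i a * vv j a) = if i = j then (1:ℝ) else 0 := by
      intro i j
      have h := hVo (σ i) (σ j)
      simp only [hvv]
      rw [h]
      by_cases hij : i = j
      · simp [hij]
      · rw [if_neg (fun hc => hij (σ.injective hc)), if_neg hij]
    have hvvcol : ∀ a b, (∑ i, vv i a * vv i b) = if a = b then (1:ℝ) else 0 := by
      intro a b
      simp only [hvv]
      rw [Equiv.sum_comp σ (fun i => V a i * V b i)]
      exact hVcol a b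
    have hddsum : (∑ i, dd i) = 1 := by
      simp only [hdd]
      rw [Equiv.sum_comp σ d0]
      exact htrB
    have hddcard : Fintype.card {i // dd i ≠ 0} = m := by
      rw [← hrkB]
      exact Fintype.card_congr (Equiv.subtypeEquiv σ (fun i => by simp [hdd]))
    have hddzero : ∀ i : Fin k, m ≤ (i : ℕ) → dd i = 0 := by
      intro i hi
      by_contra hne
      have hpos : 0 < dd i := lt_of_le_of_ne (hdd_nn i) (Ne.symm hne)
      have hsub : Finset.Iic i ⊆ Finset.univ.filter (fun j => dd j ≠ 0) := by
        intro j hj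
        rw [Finset.mem_filter]
        refine ⟨Finset.mem_univ j, ?_⟩
        have := hdd_anti j i (Finset.mem_Iic.mp hj)
        exact ne_of_gt (lt_of_lt_of_le hpos this)
      have hcard1 : (Finset.Iic i).card = (i : ℕ) + 1 := Fin.card_Iic i
      have hcard2 : (Finset.univ.filter (fun j => dd j ≠ 0)).card = m := by
        rw [← hddcard, Fintype.card_subtype]
      have := Finset.card_le_card hsub
      omega
    -- ℕ-extensions
    set D : ℕ → ℝ := fun n => if h : n < k then dd ⟨n, h⟩ else 0 with hD
    set L : ℕ → ℝ := fun n => if h : n < k then lam ⟨n, h⟩ else 0 with hL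
    set C : ℕ → ℝ := fun n => if h : n < k then c ⟨n, h⟩ else 0 with hC
    set SS : ℕ → ℕ → ℝ := fun i j => if hi : i < k then if hj : j < k then
        (∑ a, vv ⟨i, hi⟩ a * U ⟨j, hj⟩ a)^2 else 0 else 0 with hSS
    have hDk : ∀ n, k ≤ n → D n = 0 := fun n hn => dif_neg (not_lt.mpr hn)
    have hLk : ∀ n, k ≤ n → L n = 0 := fun n hn => dif_neg (not_lt.mpr hn)
    have hCk : ∀ n, k ≤ n → C n = 0 := fun n hn => dif_neg (not_lt.mpr hn)
    have hDval : ∀ (n : ℕ) (h : n < k), D n = dd ⟨n, h⟩ := fun n h => dif_pos h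
    have hLval : ∀ (n : ℕ) (h : n < k), L n = lam ⟨n, h⟩ := fun n h => dif_pos h
    have hCval : ∀ (n : ℕ) (h : n < k), C n = c ⟨n, h⟩ := fun n h => dif_pos h
    have hD_nn : ∀ n, 0 ≤ D n := by
      intro n; by_cases h : n < k
      · rw [hDval n h]; exact hdd_nn _
      · rw [hDk n (not_lt.mp h)]
    have hL_nn : ∀ n, 0 ≤ L n := by
      intro n; by_cases h : n < k
      · rw [hLval n h]; exact hlam_nonneg _
      · rw [hLk n (not_lt.mp h)]
    have hD_anti : ∀ a b : ℕ, a ≤ b → D b ≤ D a := by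
      intro a b hab
      by_cases hb : b < k
      · have ha : a < k := lt_of_le_of_lt hab hb
        rw [hDval a ha, hDval b hb]
        exact hdd_anti _ _ hab
      · rw [hDk b (not_lt.mp hb)]; exact hD_nn a
    have hL_anti : ∀ a b : ℕ, a ≤ b → L b ≤ L a := by
      intro a b hab
      by_cases hb : b < k
      · have ha : a < k := lt_of_le_of_lt hab hb
        rw [hLval a ha, hLval b hb]
        exact hanti _ _ hab
      · rw [hLk b (not_lt.mp hb)]; exact hL_nn a
    have hDm : ∀ n, m ≤ n → D n = 0 := by
      intro n hn
      by_cases h : n < k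
      · rw [hDval n h]; exact hddzero ⟨n, h⟩ hn
      · exact hDk n (not_lt.mp h)
    have hCm : ∀ n, m ≤ n → C n = 0 := by
      intro n hn
      by_cases h : n < k
      · rw [hCval n h]; exact hc_zero ⟨n, h⟩ hn
      · exact hCk n (not_lt.mp h)
    have hSS_nn : ∀ i j, 0 ≤ SS i j := by
      intro i j
      simp only [hSS]
      split_ifs with h1 h2
      · exact sq_nonneg _
      · exact le_refl 0
      · exact le_refl 0
    -- conversion between Fin sums and range sums
    have hconv : ∀ (f : Fin k → ℝ) (Fx : ℕ → ℝ), (∀ (n : ℕ) (h : n < k), Fx n = f ⟨n, h⟩) →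
        ∑ i ∈ Finset.range k, Fx i = ∑ i : Fin k, f i := by
      intro f Fx hfx
      rw [← Fin.sum_univ_eq_sum_range Fx k]
      exact Finset.sum_congr rfl fun i _ => by rw [hfx i.val i.isLt]
    have hSrow : ∀ i, i < k → ∑ j ∈ Finset.range k, SS i j = 1 := by
      intro i hi
      have h1 : ∑ j ∈ Finset.range k, SS i j
          = ∑ j : Fin k, (dotProduct (vv ⟨i, hi⟩) (U j))^2 := by
        refine hconv _ _ fun n h => ?_
        simp only [hSS, dif_pos hi, dif_pos h]
        rfl
      rw [h1, pars (vv ⟨i, hi⟩) U hU2]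
      have := hvvo ⟨i, hi⟩ ⟨i, hi⟩
      rw [if_pos rfl] at this
      exact this
    have hScol : ∀ j, j < k → ∑ i ∈ Finset.range k, SS i j = 1 := by
      intro j hj
      have h1 : ∑ i ∈ Finset.range k, SS i j
          = ∑ i : Fin k, (dotProduct (U ⟨j, hj⟩) (vv i))^2 := by
        refine hconv _ _ fun n h => ?_
        simp only [hSS, dif_pos h, dif_pos hj]
        rw [show dotProduct (U ⟨j, hj⟩) (vv ⟨n, h⟩)
            = ∑ a, vv ⟨n, h⟩ a * U ⟨j, hj⟩ a from Finset.sum_congr rfl fun a _ => mul_comm _ _]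
      rw [h1, pars (U ⟨j, hj⟩) vv hvvcol]
      exact hUU ⟨j, hj⟩
    -- distance formulas
    have hdFB : dF B μ = (∑ i : Fin k, dd i * dd i) + (∑ j : Fin k, lam j * lam j)
        - 2 * ∑ i : Fin k, ∑ j : Fin k,
            dd i * lam j * (dotProduct (vv i) (U j))^2 := by
      rw [hdF]
      rw [Finset.sum_congr rfl fun a _ => Finset.sum_congr rfl fun b _ =>
        (by rw [hBd2 a b, hmu a b] :
          (B a b - μ a b)^2 = ((∑ i, dd i * (vv i a * vv i b))
            - (∑ j, lam j * (U j a * U j b)))^2)]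
      exact dF_formula dd lam vv U hvvo horth
    have hdFA : dF A μ = (∑ j : Fin k, c j * c j) + (∑ j : Fin k, lam j * lam j)
        - 2 * ∑ j : Fin k, c j * lam j := by
      rw [hdF]
      rw [Finset.sum_congr rfl fun a _ => Finset.sum_congr rfl fun b _ =>
        (by rw [hAe a b, hmu a b] :
          (A a b - μ a b)^2 = ((∑ i, c i * (U i a * U i b))
            - (∑ j, lam j * (U j a * U j b)))^2)]
      rw [dF_formula c lam U U horth horth, quad_diag c lam U horth]
    -- bridges
    have bDD : ∑ j ∈ Finset.range k, D j * D j = ∑ i : Fin k, dd i * dd i :=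
      hconv _ _ fun n h => by rw [hDval n h]
    have bCC : ∑ j ∈ Finset.range k, C j * C j = ∑ j : Fin k, c j * c j :=
      hconv _ _ fun n h => by rw [hCval n h]
    have bCL : ∑ j ∈ Finset.range k, C j * L j = ∑ j : Fin k, c j * lam j :=
      hconv _ _ fun n h => by rw [hCval n h, hLval n h]
    have bD1 : ∑ j ∈ Finset.range k, D j = 1 := by
      rw [hconv dd D hDval]; exact hddsum
    have bC1 : ∑ j ∈ Finset.range k, C j = 1 := by
      rw [hconv c C hCval]; exact hc_sum
    have bT : ∑ i ∈ Finset.range k, ∑ j ∈ Finset.range k, SS i j * (D i * L j)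
        = ∑ i : Fin k, ∑ j : Fin k, dd i * lam j * (dotProduct (vv i) (U j))^2 := by
      refine hconv _ _ fun n h => ?_
      refine hconv _ _ fun n' h' => ?_
      simp only [hSS, dif_pos h, dif_pos h']
      rw [hDval n h, hLval n' h']
      rw [show dotProduct (vv ⟨n, h⟩) (U ⟨n', h'⟩)
          = ∑ a, vv ⟨n, h⟩ a * U ⟨n', h'⟩ a from rfl]
      ring
    -- core identity
    have key1 := core_identity k D L SS (hDk k le_rfl) (hLk k le_rfl)
    have e1 := sub_sq_expand1 (Finset.range k) D C
    have e2 := sum_mul_expand (Finset.range k) D C L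
    have haux : ∑ j ∈ Finset.range k, (D j - C j) * (L j - C j) = 0 := by
      have hpt : ∀ j ∈ Finset.range k, (D j - C j) * (L j - C j)
          = (lbar - 1 / m) * (D j - C j) := by
        intro j hj
        have hjk := Finset.mem_range.mp hj
        by_cases hjm : j < m
        · have hLC : L j - C j = lbar - 1 / m := by
            rw [hLval j hjk, hCval j hjk]
            simp only [hcdef]
            rw [if_pos hjm]
            ring
          rw [hLC]; ring
        · rw [hDm j (not_lt.mp hjm), hCm j (not_lt.mp hjm)]; ring
      rw [Finset.sum_congr rfl hpt, ← Finset.mul_sum, Finset.sum_sub_distrib, bD1, bC1]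
      ring
    have key2 : dF B μ - dF A μ
        = 2 * (∑ a ∈ Finset.range k, ∑ b ∈ Finset.range k,
            (D a - D (a + 1)) * (L b - L (b + 1)) *
              (((min a b : ℝ) + 1) - ∑ i ∈ Finset.range (a + 1),
                ∑ j ∈ Finset.range (b + 1), SS i j))
          + ∑ j ∈ Finset.range k, (D j - C j)^2 := by
      rw [hdFB, hdFA]
      linarith [key1, e1, e2, haux, bDD, bCC, bCL, bT]
    have hterm_nn : ∀ a ∈ Finset.range k, ∀ b ∈ Finset.range k,
        0 ≤ (D a - D (a + 1)) * (L b - L (b + 1)) *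
          (((min a b : ℝ) + 1) - ∑ i ∈ Finset.range (a + 1),
            ∑ j ∈ Finset.range (b + 1), SS i j) := by
      intro a ha b hb
      have h1 : 0 ≤ D a - D (a + 1) := sub_nonneg.mpr (hD_anti a (a + 1) (Nat.le_succ a))
      have h2 : 0 ≤ L b - L (b + 1) := sub_nonneg.mpr (hL_anti b (b + 1) (Nat.le_succ b))
      have h3 := P_le k a b SS (Finset.mem_range.mp ha) (Finset.mem_range.mp hb)
        hSS_nn hSrow hScol
      exact mul_nonneg (mul_nonneg h1 h2) (sub_nonneg.mpr h3)
    have hRHS_nn : 0 ≤ ∑ a ∈ Finset.range k, ∑ b ∈ Finset.range k,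
        (D a - D (a + 1)) * (L b - L (b + 1)) *
          (((min a b : ℝ) + 1) - ∑ i ∈ Finset.range (a + 1),
            ∑ j ∈ Finset.range (b + 1), SS i j) :=
      Finset.sum_nonneg fun a ha => Finset.sum_nonneg fun b hb => hterm_nn a ha b hb
    have hsq_nn : 0 ≤ ∑ j ∈ Finset.range k, (D j - C j)^2 :=
      Finset.sum_nonneg fun j _ => sq_nonneg _
    constructor
    · linarith [key2, hRHS_nn, hsq_nn]
    · intro heq
      have hzero : 2 * (∑ a ∈ Finset.range k, ∑ b ∈ Finset.range k,
            (D a - D (a + 1)) * (L b - L (b + 1)) *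
              (((min a b : ℝ) + 1) - ∑ i ∈ Finset.range (a + 1),
                ∑ j ∈ Finset.range (b + 1), SS i j))
          + ∑ j ∈ Finset.range k, (D j - C j)^2 = 0 := by
        rw [← key2, heq]; ring
      have hR0 : (∑ a ∈ Finset.range k, ∑ b ∈ Finset.range k,
            (D a - D (a + 1)) * (L b - L (b + 1)) *
              (((min a b : ℝ) + 1) - ∑ i ∈ Finset.range (a + 1),
                ∑ j ∈ Finset.range (b + 1), SS i j)) = 0 := by linarith
      have hsq0 : (∑ j ∈ Finset.range k, (D j - C j)^2) = 0 := by linarith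
      have hDC : ∀ n, D n = C n := by
        intro n
        by_cases h : n < k
        · have h1 := (Finset.sum_eq_zero_iff_of_nonneg
            (fun j _ => sq_nonneg (D j - C j))).mp hsq0 n (Finset.mem_range.mpr h)
          have h2 : D n - C n = 0 := by
            have := pow_eq_zero_iff (n := 2) (by norm_num) |>.mp h1
            exact this
          linarith
        · rw [hDk n (not_lt.mp h), hCk n (not_lt.mp h)]
      have hterms0 : ∀ a ∈ Finset.range k, ∀ b ∈ Finset.range k,
          (D a - D (a + 1)) * (L b - L (b + 1)) *
            (((min a b : ℝ) + 1) - ∑ i ∈ Finset.range (a + 1),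
              ∑ j ∈ Finset.range (b + 1), SS i j) = 0 := by
        intro a ha b hb
        have houter := (Finset.sum_eq_zero_iff_of_nonneg
          (fun a ha => Finset.sum_nonneg fun b hb => hterm_nn a ha b hb)).mp hR0 a ha
        exact (Finset.sum_eq_zero_iff_of_nonneg
          (fun b hb => hterm_nn a ha b hb)).mp houter b hb
      have hP : ∀ a b, a ∈ Finset.range k → b ∈ Finset.range k →
          D a - D (a + 1) ≠ 0 → L b - L (b + 1) ≠ 0 →
          (((min a b : ℝ) + 1) - ∑ i ∈ Finset.range (a + 1),
            ∑ j ∈ Finset.range (b + 1), SS i j) = 0 := by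
        intro a b ha hb hx hy
        have h := hterms0 a ha b hb
        rcases mul_eq_zero.mp h with h1 | h2
        · rcases mul_eq_zero.mp h1 with h3 | h4
          · exact absurd h3 hx
          · exact absurd h4 hy
        · exact h2
      have key3 := core_identity k C C SS (hCk k le_rfl) (hCk k le_rfl)
      have hz : ∑ a ∈ Finset.range k, ∑ b ∈ Finset.range k,
          (C a - C (a + 1)) * (C b - C (b + 1)) *
            (((min a b : ℝ) + 1) - ∑ i ∈ Finset.range (a + 1),
              ∑ j ∈ Finset.range (b + 1), SS i j) = 0 := by
        refine Finset.sum_eq_zero fun a ha => Finset.sum_eq_zero fun b hb => ?_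
        by_cases hca : C a - C (a + 1) = 0
        · rw [hca]; ring
        by_cases hcb : C b - C (b + 1) = 0
        · rw [hcb]; ring
        have ham : a < m := by
          by_contra hh
          exact hca (by rw [hCm a (not_lt.mp hh),
            hCm (a + 1) (le_trans (not_lt.mp hh) (Nat.le_succ a))]; ring)
        have hbm : b < m := by
          by_contra hh
          exact hcb (by rw [hCm b (not_lt.mp hh),
            hCm (b + 1) (le_trans (not_lt.mp hh) (Nat.le_succ b))]; ring)
        have hDa : D a - D (a + 1) ≠ 0 := by rw [hDC a, hDC (a + 1)]; exact hca
        have hLb : L b - L (b + 1) ≠ 0 := by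
          have hbk := Finset.mem_range.mp hb
          rcases Nat.lt_or_ge (b + 1) m with hlt | hge
          · have hb1k : b + 1 < k := lt_of_lt_of_le hlt hmk.le
            have hCb : C b = L b + (1 / m - lbar) := by
              rw [hCval b hbk, hLval b hbk]
              simp only [hcdef]
              rw [if_pos hbm]
              ring
            have hCb1 : C (b + 1) = L (b + 1) + (1 / m - lbar) := by
              rw [hCval (b + 1) hb1k, hLval (b + 1) hb1k]
              simp only [hcdef]
              rw [if_pos hlt]
              ring
            intro hc
            exact hcb (by rw [hCb, hCb1]; linarith)
          · have hbm1 : b + 1 = m := by omega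
            have hb1k : b + 1 < k := by omega
            have hgt : L (b + 1) < L b := by
              rw [hLval b hbk, hLval (b + 1) hb1k]
              exact hgap ⟨b, hbk⟩ ⟨b + 1, hb1k⟩ hbm (by simp [hbm1])
            exact sub_ne_zero.mpr (ne_of_gt hgt)
        rw [hP a b ha hb hDa hLb]
        ring
      rw [hz] at key3
      have hTCC : ∑ i ∈ Finset.range k, ∑ j ∈ Finset.range k, SS i j * (C i * C j)
          = ∑ j ∈ Finset.range k, C j * C j := by linarith [key3]
      have hddc : ∀ i : Fin k, dd i = c i := by
        intro i
        have h := hDC i.val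
        rw [hDval i.val i.isLt, hCval i.val i.isLt] at h
        simpa using h
      have bTCC : ∑ i ∈ Finset.range k, ∑ j ∈ Finset.range k, SS i j * (C i * C j)
          = ∑ i : Fin k, ∑ j : Fin k,
              dd i * c j * (dotProduct (vv i) (U j))^2 := by
        refine hconv _ _ fun n h => ?_
        refine hconv _ _ fun n' h' => ?_
        simp only [hSS, dif_pos h, dif_pos h']
        rw [hCval n h, hCval n' h', ← hddc ⟨n, h⟩]
        rw [show dotProduct (vv ⟨n, h⟩) (U ⟨n', h'⟩)
            = ∑ a, vv ⟨n, h⟩ a * U ⟨n', h'⟩ a from rfl]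
        ring
      have hBA : ∑ a : Fin k, ∑ b : Fin k, (B a b - A a b)^2 = 0 := by
        rw [Finset.sum_congr rfl fun a _ => Finset.sum_congr rfl fun b _ =>
          (by rw [hBd2 a b, hAe a b] :
            (B a b - A a b)^2 = ((∑ i, dd i * (vv i a * vv i b))
              - (∑ j, c j * (U j a * U j b)))^2)]
        rw [dF_formula dd c vv U hvvo horth]
        have h1 : ∑ i : Fin k, dd i * dd i = ∑ j : Fin k, c j * c j :=
          Finset.sum_congr rfl fun i _ => by rw [hddc i]
        have h2 : ∑ i : Fin k, ∑ j : Fin k,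
            dd i * c j * (dotProduct (vv i) (U j))^2
            = ∑ j : Fin k, c j * c j := by
          rw [← bTCC, hTCC, bCC]
        rw [h1, h2]
        ring
      ext a b
      have h1 := (Finset.sum_eq_zero_iff_of_nonneg
        (fun a _ => Finset.sum_nonneg fun b _ => sq_nonneg (B a b - A a b))).mp hBA
        a (Finset.mem_univ a)
      have h2 := (Finset.sum_eq_zero_iff_of_nonneg
        (fun b _ => sq_nonneg (B a b - A a b))).mp h1 b (Finset.mem_univ b)
      have h3 : B a b - A a b = 0 := by
        have := pow_eq_zero_iff (n := 2) (by norm_num) |>.mp h2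
        exact this
      linarith
  exact ⟨hAmem, fun B hB => (main B hB).1, fun B hB h => (main B hB).2 h⟩
end

section
/- Let μ̃ be a real symmetric (k−1)×(k−1) matrix with eigenvalues λ₁ ≥ … ≥ λ_{k−1} and orthonormal eigenvectors U₁,…,U_{k−1}, and fix m < k−1 with λ_m > λ_{m+1}. Then the unique minimizer in Frobenius norm of ‖P − μ̃‖ over all rank-m orthogonal projection matrices P (i.e., symmetric idempotent matrices of trace m) is P = Σ_{j=1}^m U_j U_jᵀ. -/
/-!
In the orthonormal eigenbasis `Q` of `μ`, a symmetric idempotent `P` of trace `m` satisfies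
`‖P - μ‖² = m - 2 tr (P μ) + ‖μ‖²` and `tr (P μ) = ∑ λⱼ dⱼ`, where the diagonal entries `dⱼ` of
`Q P Qᵀ` lie in `[0, 1]` and sum to `m`. Against a threshold `c` inside the spectral gap,
`∑_{j<m} λⱼ - ∑ λⱼ dⱼ = ∑ (λⱼ - c)(1_{j<m} - dⱼ)` is a sum of nonnegative terms, so the best
weights are the indicator of the top `m` eigenvalues, and only they attain the optimum. A symmetric
idempotent whose diagonal is `0`/`1` is diagonal, so `Q P Qᵀ` is that indicator and `P = P₀`.
-/

open Matrix Finset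

lemma exists_threshold_of_forall_lt {ι R : Type*} [Fintype ι] [DecidableEq ι] [LinearOrder R]
    {S : Finset ι} {lam : ι → R} (hSc : Sᶜ.Nonempty) (h : ∀ i ∈ S, ∀ j ∉ S, lam j < lam i) :
    ∃ c, (∀ i ∈ S, c < lam i) ∧ ∀ j ∉ S, lam j ≤ c := by
  obtain ⟨j₀, hj₀, hmax⟩ := exists_max_image Sᶜ lam hSc
  exact ⟨lam j₀, fun i hi => h i hi j₀ (mem_compl.1 hj₀), fun j hj => hmax j (mem_compl.2 hj)⟩

section WeightedSum

variable {ι R : Type*} [DecidableEq ι] [CommRing R] {S : Finset ι} {lam d : ι → R} {c : R}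

lemma mul_indicator_sub_nonneg [LinearOrder R] [IsStrictOrderedRing R]
    (hS : ∀ i ∈ S, c ≤ lam i) (hSc : ∀ j ∉ S, lam j ≤ c) (hd0 : ∀ j, 0 ≤ d j)
    (hd1 : ∀ j, d j ≤ 1) (j : ι) :
    0 ≤ (lam j - c) * ((if j ∈ S then 1 else 0) - d j) := by
  by_cases hj : j ∈ S
  · simpa [hj] using mul_nonneg (sub_nonneg.2 (hS j hj)) (sub_nonneg.2 (hd1 j))
  · simpa [hj] using
      mul_nonneg_of_nonpos_of_nonpos (sub_nonpos.2 (hSc j hj)) (neg_nonpos.2 (hd0 j))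

variable [Fintype ι]

lemma sum_sub_sum_mul_eq_sum_mul_sub (hd : ∑ j, d j = #S) :
    ∑ j ∈ S, lam j - ∑ j, lam j * d j
      = ∑ j, (lam j - c) * ((if j ∈ S then 1 else 0) - d j) := by
  simp only [mul_sub, sub_mul, mul_ite, mul_one, mul_zero, sum_sub_distrib, sum_ite_mem,
    univ_inter, sum_const, ← mul_sum, hd, nsmul_eq_mul]
  ring

variable [LinearOrder R] [IsStrictOrderedRing R]

lemma sum_mul_le_sum_of_gap (hS : ∀ i ∈ S, c ≤ lam i) (hSc : ∀ j ∉ S, lam j ≤ c)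
    (hd0 : ∀ j, 0 ≤ d j) (hd1 : ∀ j, d j ≤ 1) (hd : ∑ j, d j = #S) :
    ∑ j, lam j * d j ≤ ∑ j ∈ S, lam j := by
  suffices 0 ≤ ∑ j ∈ S, lam j - ∑ j, lam j * d j by linarith
  rw [sum_sub_sum_mul_eq_sum_mul_sub (c := c) hd]
  exact sum_nonneg fun j _ => mul_indicator_sub_nonneg hS hSc hd0 hd1 j

lemma eq_indicator_of_sum_mul_eq (hS : ∀ i ∈ S, c < lam i) (hSc : ∀ j ∉ S, lam j ≤ c)
    (hd0 : ∀ j, 0 ≤ d j) (hd1 : ∀ j, d j ≤ 1) (hd : ∑ j, d j = #S)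
    (heq : ∑ j, lam j * d j = ∑ j ∈ S, lam j) :
    d = fun j => if j ∈ S then 1 else 0 := by
  have hterm_zero := (sum_eq_zero_iff_of_nonneg fun j _ =>
      mul_indicator_sub_nonneg (fun i hi => (hS i hi).le) hSc hd0 hd1 j).1 <| by
    rw [← sum_sub_sum_mul_eq_sum_mul_sub hd, heq, sub_self]
  have hone : ∀ i ∈ S, d i = 1 := fun i hi => by
    have := hterm_zero i (mem_univ i)
    simp only [hi, if_true, mul_eq_zero, sub_eq_zero] at this
    exact (this.resolve_left (hS i hi).ne').symm
  have hzero : ∀ j ∉ S, d j = 0 := by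
    have hsplit := sum_add_sum_compl S d
    rw [sum_congr rfl hone, sum_const, nsmul_one, hd, add_eq_left] at hsplit
    exact fun j hj => (sum_eq_zero_iff_of_nonneg fun j _ => hd0 j).1 hsplit j (mem_compl.2 hj)
  funext j
  by_cases hj : j ∈ S
  · simp [hj, hone j hj]
  · simp [hj, hzero j hj]

end WeightedSum

namespace Matrix

variable {ι R : Type*} [Fintype ι]

section CommRing

variable [CommRing R]

lemma sum_sum_sub_sq_eq (B C : Matrix ι ι R) :
    ∑ i, ∑ j, (B i j - C i j) ^ 2 = trace (B * Bᵀ) - 2 * trace (B * Cᵀ) + trace (C * Cᵀ) := by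
  simp only [trace, diag_apply, mul_apply, transpose_apply, ← sum_sub_distrib,
    ← sum_add_distrib, mul_sum]
  exact sum_congr rfl fun i _ => sum_congr rfl fun j _ => by ring

lemma IsSymm.mul_mul_transpose {P : Matrix ι ι R} (hP : P.IsSymm) (Q : Matrix ι ι R) :
    (Q * P * Qᵀ).IsSymm := by
  simp only [IsSymm, transpose_mul, transpose_transpose, hP.eq, Matrix.mul_assoc]

lemma IsSymm.apply_self_eq_sum_sq {P : Matrix ι ι R} (hP : P.IsSymm) (hPP : IsIdempotentElem P)
    (j : ι) : P j j = ∑ k, P j k ^ 2 := by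
  conv_lhs => rw [← hPP.eq, mul_apply]
  exact sum_congr rfl fun k _ => by rw [hP.apply j k, sq]

variable [DecidableEq ι] {Q P : Matrix ι ι R}

lemma isIdempotentElem_mul_mul_transpose (hQ : Qᵀ * Q = 1) (hP : IsIdempotentElem P) :
    IsIdempotentElem (Q * P * Qᵀ) := by
  calc Q * P * Qᵀ * (Q * P * Qᵀ) = Q * P * (Qᵀ * Q) * P * Qᵀ := by simp only [Matrix.mul_assoc]
    _ = Q * P * Qᵀ := by rw [hQ, Matrix.mul_one, Matrix.mul_assoc Q, hP.eq]

lemma trace_mul_mul_transpose (hQ : Qᵀ * Q = 1) (P : Matrix ι ι R) :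
    trace (Q * P * Qᵀ) = trace P := by
  rw [trace_mul_comm, ← Matrix.mul_assoc, hQ, Matrix.one_mul]

lemma trace_mul_transpose_mul_diagonal_mul (P Q : Matrix ι ι R) (lam : ι → R) :
    trace (P * (Qᵀ * diagonal lam * Q)) = ∑ j, lam j * (Q * P * Qᵀ) j j := by
  rw [← Matrix.mul_assoc, ← Matrix.mul_assoc, trace_mul_comm, ← Matrix.mul_assoc,
    ← Matrix.mul_assoc]
  simp only [trace, diag_apply, mul_diagonal, mul_comm]

lemma of_mul_transpose_of_orthonormal {U : ι → ι → R}
    (horth : ∀ i j, U i ⬝ᵥ U j = if i = j then 1 else 0) : of U * (of U)ᵀ = 1 := by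
  ext i j
  simpa [mul_apply, one_apply, dotProduct] using horth i j

lemma eq_transpose_mul_diagonal_mul_of_mulVec_eq {U : ι → ι → R} {μ : Matrix ι ι R}
    {lam : ι → R} (hU : of U * (of U)ᵀ = 1) (heig : ∀ j, μ *ᵥ U j = lam j • U j) :
    μ = (of U)ᵀ * diagonal lam * of U := by
  have hμU : μ * (of U)ᵀ = (of U)ᵀ * diagonal lam := by
    ext i j
    rw [mul_diagonal]
    simpa [mul_apply, mulVec, dotProduct, mul_comm] using congrFun (heig j) i
  rw [← hμU, Matrix.mul_assoc, mul_eq_one_comm.1 hU, Matrix.mul_one]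

/-- The orthogonal projection onto the span of the rows `Q j`, `j ∈ S`, when `Q` is orthogonal. -/
def rowProj (Q : Matrix ι ι R) (S : Finset ι) : Matrix ι ι R :=
  Qᵀ * diagonal (fun j => if j ∈ S then 1 else 0) * Q

lemma sum_vecMulVec_eq_rowProj (U : ι → ι → R) (S : Finset ι) :
    ∑ j ∈ S, vecMulVec (U j) (U j) = rowProj (of U) S := by
  ext i k
  rw [rowProj, mul_apply]
  simp [sum_apply, vecMulVec_apply, mul_diagonal]

lemma isSymm_rowProj (Q : Matrix ι ι R) (S : Finset ι) : (rowProj Q S).IsSymm := by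
  simpa [rowProj] using (isSymm_diagonal _).mul_mul_transpose Qᵀ

lemma mul_rowProj_mul_transpose (hQ : Q * Qᵀ = 1) (S : Finset ι) :
    Q * rowProj Q S * Qᵀ = diagonal fun j => if j ∈ S then 1 else 0 := by
  simp only [rowProj, ← Matrix.mul_assoc, hQ, Matrix.one_mul]
  rw [Matrix.mul_assoc, hQ, Matrix.mul_one]

lemma isIdempotentElem_rowProj (hQ : Q * Qᵀ = 1) (S : Finset ι) :
    IsIdempotentElem (rowProj Q S) := by
  have hD : IsIdempotentElem (diagonal fun j => if j ∈ S then (1 : R) else 0) := by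
    rw [IsIdempotentElem, diagonal_mul_diagonal]
    congr 1
    funext j
    split_ifs <;> simp
  simpa [rowProj] using isIdempotentElem_mul_mul_transpose (Q := Qᵀ) (by simpa using hQ) hD

lemma trace_rowProj (hQ : Q * Qᵀ = 1) (S : Finset ι) : (rowProj Q S).trace = #S := by
  rw [rowProj, trace_mul_comm, ← Matrix.mul_assoc, hQ, Matrix.one_mul, trace_diagonal, sum_boole,
    filter_mem_eq_inter, univ_inter]

lemma trace_rowProj_mul (hQ : Q * Qᵀ = 1) (S : Finset ι) (lam : ι → R) :
    trace (rowProj Q S * (Qᵀ * diagonal lam * Q)) = ∑ j ∈ S, lam j := by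
  simp [trace_mul_transpose_mul_diagonal_mul, mul_rowProj_mul_transpose hQ, sum_ite_mem]

end CommRing

section OrderedRing

variable [CommRing R] [LinearOrder R] [IsStrictOrderedRing R] {P : Matrix ι ι R}

lemma IsSymm.apply_self_nonneg (hP : P.IsSymm) (hPP : IsIdempotentElem P) (j : ι) :
    0 ≤ P j j :=
  hP.apply_self_eq_sum_sq hPP j ▸ sum_nonneg fun _ _ => sq_nonneg _

lemma IsSymm.apply_self_le_one (hP : P.IsSymm) (hPP : IsIdempotentElem P) (j : ι) :
    P j j ≤ 1 := by
  have hsq : P j j ^ 2 ≤ P j j := hP.apply_self_eq_sum_sq hPP j ▸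
    single_le_sum (f := fun k => P j k ^ 2) (fun _ _ => sq_nonneg _) (mem_univ j)
  nlinarith [hP.apply_self_nonneg hPP j]

lemma IsSymm.eq_diagonal_of_apply_self_sq [DecidableEq ι] (hP : P.IsSymm)
    (hPP : IsIdempotentElem P) (hdiag : ∀ j, P j j ^ 2 = P j j) :
    P = diagonal fun j => P j j := by
  ext j k
  rcases eq_or_ne j k with rfl | hjk
  · simp
  rw [diagonal_apply_ne _ hjk]
  have hoff : ∑ k ∈ univ.erase j, P j k ^ 2 = 0 := by
    have := hP.apply_self_eq_sum_sq hPP j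
    rw [← add_sum_erase _ _ (mem_univ j), hdiag j] at this
    linarith
  exact pow_eq_zero_iff two_ne_zero |>.1 <|
    (sum_eq_zero_iff_of_nonneg fun k _ => sq_nonneg (P j k)).1 hoff k
      (mem_erase.2 ⟨hjk.symm, mem_univ k⟩)

variable [DecidableEq ι] {Q : Matrix ι ι R} {S : Finset ι} {lam : ι → R} {c : R}

lemma IsSymm.trace_mul_le_sum_of_gap (hQ : Q * Qᵀ = 1) (hP : P.IsSymm)
    (hPP : IsIdempotentElem P) (htr : P.trace = #S) (hS : ∀ i ∈ S, c ≤ lam i)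
    (hSc : ∀ j ∉ S, lam j ≤ c) :
    trace (P * (Qᵀ * diagonal lam * Q)) ≤ ∑ j ∈ S, lam j := by
  have hQ' : Qᵀ * Q = 1 := mul_eq_one_comm.1 hQ
  have hP' := hP.mul_mul_transpose Q
  have hPP' := isIdempotentElem_mul_mul_transpose hQ' hPP
  rw [trace_mul_transpose_mul_diagonal_mul]
  exact sum_mul_le_sum_of_gap hS hSc (hP'.apply_self_nonneg hPP') (hP'.apply_self_le_one hPP')
    (by rw [← htr, ← trace_mul_mul_transpose hQ' P]; rfl)

lemma IsSymm.eq_rowProj_of_trace_mul_eq (hQ : Q * Qᵀ = 1) (hP : P.IsSymm)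
    (hPP : IsIdempotentElem P) (htr : P.trace = #S) (hS : ∀ i ∈ S, c < lam i)
    (hSc : ∀ j ∉ S, lam j ≤ c) (heq : trace (P * (Qᵀ * diagonal lam * Q)) = ∑ j ∈ S, lam j) :
    P = rowProj Q S := by
  have hQ' : Qᵀ * Q = 1 := mul_eq_one_comm.1 hQ
  have hP' := hP.mul_mul_transpose Q
  have hPP' := isIdempotentElem_mul_mul_transpose hQ' hPP
  rw [trace_mul_transpose_mul_diagonal_mul] at heq
  have hdiag := eq_indicator_of_sum_mul_eq hS hSc (hP'.apply_self_nonneg hPP')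
    (hP'.apply_self_le_one hPP') (by rw [← htr, ← trace_mul_mul_transpose hQ' P]; rfl) heq
  have hconj : Q * P * Qᵀ = diagonal fun j => if j ∈ S then 1 else 0 := by
    rw [hP'.eq_diagonal_of_apply_self_sq hPP' fun j => ?_, hdiag]
    rw [congrFun hdiag j]
    split_ifs <;> norm_num
  calc P = Qᵀ * Q * P * (Qᵀ * Q) := by rw [hQ', Matrix.one_mul, Matrix.mul_one]
    _ = Qᵀ * (Q * P * Qᵀ) * Q := by simp only [Matrix.mul_assoc]
    _ = rowProj Q S := by rw [hconj, rowProj]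

end OrderedRing

end Matrix

theorem affine_shape_projection_general
    {n m : ℕ} (hmn : m < n)
    (μ : Matrix (Fin n) (Fin n) ℝ) (hsym : μ.IsSymm)
    (lam : Fin n → ℝ) (U : Fin n → Fin n → ℝ)
    (heig : ∀ j, μ.mulVec (U j) = lam j • U j)
    (horth : ∀ i j, dotProduct (U i) (U j) = if i = j then (1 : ℝ) else 0)
    (hgap : ∀ i j : Fin n, (i : ℕ) < m → m ≤ (j : ℕ) → lam j < lam i)
    (P₀ : Matrix (Fin n) (Fin n) ℝ)
    (hP₀ : P₀ = ∑ j ∈ Finset.univ.filter fun j : Fin n => (j : ℕ) < m,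
      vecMulVec (U j) (U j))
    (Pset : Set (Matrix (Fin n) (Fin n) ℝ))
    (hPset : Pset = {P | P.IsSymm ∧ P * P = P ∧ P.trace = (m : ℝ)})
    (dF : Matrix (Fin n) (Fin n) ℝ → Matrix (Fin n) (Fin n) ℝ → ℝ)
    (hdF : ∀ B C, dF B C = ∑ i, ∑ j, (B i j - C i j) ^ 2) :
    P₀ ∈ Pset ∧ (∀ P ∈ Pset, dF P₀ μ ≤ dF P μ) ∧
      (∀ P ∈ Pset, dF P μ = dF P₀ μ → P = P₀) := by
  set S : Finset (Fin n) := univ.filter fun j => (j : ℕ) < m with hS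
  have hcard : (#S : ℝ) = m := by rw [hS, Fin.card_filter_val_lt, min_eq_right hmn.le]
  have hU : of U * (of U)ᵀ = 1 := of_mul_transpose_of_orthonormal horth
  have hμ := eq_transpose_mul_diagonal_mul_of_mulVec_eq hU heig
  rw [sum_vecMulVec_eq_rowProj] at hP₀
  obtain ⟨c, hcS, hcSc⟩ := exists_threshold_of_forall_lt (S := S) ⟨⟨m, hmn⟩, by simp [hS]⟩
    fun i hi j hj => hgap i j (by simpa [hS] using hi) (by simpa [hS] using hj)
  subst hPset hP₀
  have hdist : ∀ P : Matrix (Fin n) (Fin n) ℝ, P.IsSymm → IsIdempotentElem P → P.trace = m →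
      dF P μ = m - 2 * trace (P * μ) + trace (μ * μᵀ) := fun P hPs hPP hPt => by
    rw [hdF, sum_sum_sub_sq_eq, hPs.eq, hPP.eq, hPt, hsym.eq]
  have hsymm₀ := isSymm_rowProj (of U) S
  have hidem₀ := isIdempotentElem_rowProj hU S
  have htr₀ : (rowProj (of U) S).trace = m := hcard ▸ trace_rowProj hU S
  have hval₀ := trace_rowProj_mul hU S lam
  rw [← hμ] at hval₀
  refine ⟨⟨hsymm₀, hidem₀, htr₀⟩, ?_, ?_⟩
  · rintro P ⟨hPs, hPP, hPt⟩
    have hle := hPs.trace_mul_le_sum_of_gap hU hPP (hPt.trans hcard.symm)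
      (fun i hi => (hcS i hi).le) hcSc
    rw [← hμ] at hle
    rw [hdist P hPs hPP hPt, hdist _ hsymm₀ hidem₀ htr₀]
    linarith
  · rintro P ⟨hPs, hPP, hPt⟩ hdeq
    rw [hdist P hPs hPP hPt, hdist _ hsymm₀ hidem₀ htr₀] at hdeq
    refine hPs.eq_rowProj_of_trace_mul_eq hU hPP (hPt.trans hcard.symm) hcS hcSc ?_
    rw [← hμ]
    linarith

/-- Projection for the affine-shape embedding: for a real symmetric matrix `μ` with
eigenvalues `λ₁ ≥ … ≥ λ_n` and a gap `λ_m > λ_{m+1}`, the unique closest (Frobenius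
norm) rank-`m` orthogonal projection matrix to `μ` is `P₀ = Σ_{j<m} U_j U_jᵀ`. -/
theorem affine_shape_projection
    {n m : ℕ} (hm : 0 < m) (hmn : m < n)
    (μ : Matrix (Fin n) (Fin n) ℝ) (hsym : μ.IsSymm)
    (lam : Fin n → ℝ) (U : Fin n → Fin n → ℝ)
    (heig : ∀ j, μ.mulVec (U j) = lam j • U j)
    (horth : ∀ i j, dotProduct (U i) (U j) = if i = j then (1 : ℝ) else 0)
    (hanti : ∀ i j : Fin n, i ≤ j → lam j ≤ lam i)
    (hgap : ∀ i j : Fin n, (i : ℕ) < m → m ≤ (j : ℕ) → lam j < lam i)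
    (P₀ : Matrix (Fin n) (Fin n) ℝ)
    (hP₀ : P₀ = ∑ j ∈ Finset.univ.filter fun j : Fin n => (j : ℕ) < m,
      vecMulVec (U j) (U j))
    (Pset : Set (Matrix (Fin n) (Fin n) ℝ))
    (hPset : Pset = {P | P.IsSymm ∧ P * P = P ∧ P.trace = (m : ℝ)})
    (dF : Matrix (Fin n) (Fin n) ℝ → Matrix (Fin n) (Fin n) ℝ → ℝ)
    (hdF : ∀ B C, dF B C = ∑ i, ∑ j, (B i j - C i j) ^ 2) :
    P₀ ∈ Pset ∧ (∀ P ∈ Pset, dF P₀ μ ≤ dF P μ) ∧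
      (∀ P ∈ Pset, dF P μ = dF P₀ μ → P = P₀) :=
  affine_shape_projection_general hmn μ hsym lam U heig horth hgap P₀ hP₀ Pset hPset dF hdF
end
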